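/- arXiv:1906.04916 — 8 statements merged into one kernel-verified Lean document; each statement's English description precedes it below -/
import Mathlib

section
/- The group G_4^3 is isomorphic to the amalgamated free product A *_F B, where A = ⟨a,b,c | a² = b² = c² = 1⟩ is the free product of three copies of ℤ/2, F = F(x,y,z) is the free group of rank 3, and B = F ⋊ ℤ/2 is the semidirect product in which the nontrivial element d of ℤ/2 acts on F by the automorphism sending each of x, y, z to its inverse. Here the amalgamated product is the pushout (in the category of groups) of the homomorphism j_A : F → A defined by x ↦ abc, y ↦ bca, z ↦ cab and the inclusion j_B : F → B of the normal factor; the isomorphism sends the generators a, b, c of G_4^3 to the images of a, b, c ∈ A and the generator d of G_4^3 to the image of d ∈ ℤ/2 ⊂ B. -/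
/-- The generators of the free group on four letters `a, b, c, d`. -/
def x : Fin 4 → FreeGroup (Fin 4) := FreeGroup.of

/-- The relators of the group `G_4^3`:
`a², b², c², d², (abcd)², (bcad)², (cabd)²`. -/
def rels43 : Set (FreeGroup (Fin 4)) :=
  {x 0 ^ 2, x 1 ^ 2, x 2 ^ 2, x 3 ^ 2,
    (x 0 * x 1 * x 2 * x 3) ^ 2, (x 1 * x 2 * x 0 * x 3) ^ 2, (x 2 * x 0 * x 1 * x 3) ^ 2}

/-- The group `G_4^3`. -/
abbrev G43 : Type := PresentedGroup rels43

/-- The generator `a` of `G_4^3`. -/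
def ga : G43 := PresentedGroup.of (rels := rels43) 0
/-- The generator `b` of `G_4^3`. -/
def gb : G43 := PresentedGroup.of (rels := rels43) 1
/-- The generator `c` of `G_4^3`. -/
def gc : G43 := PresentedGroup.of (rels := rels43) 2
/-- The generator `d` of `G_4^3`. -/
def gd : G43 := PresentedGroup.of (rels := rels43) 3

/-- The endomorphism of the free group `F(x,y,z)` inverting each generator. -/
def invEnd : FreeGroup (Fin 3) →* FreeGroup (Fin 3) :=
  FreeGroup.lift fun i => (FreeGroup.of i)⁻¹

lemma invEnd_invEnd (w : FreeGroup (Fin 3)) : invEnd (invEnd w) = w := by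
  have h : invEnd.comp invEnd = MonoidHom.id (FreeGroup (Fin 3)) := by
    apply FreeGroup.ext_hom
    intro a
    simp [invEnd]
  exact DFunLike.congr_fun h w

/-- The automorphism of the free group `F(x,y,z)` sending each of the generators
`x, y, z` to its inverse. -/
def invAut : MulAut (FreeGroup (Fin 3)) :=
  { toFun := invEnd
    invFun := invEnd
    left_inv := invEnd_invEnd
    right_inv := invEnd_invEnd
    map_mul' := invEnd.map_mul }

lemma zmod2_cases (g : Multiplicative (ZMod 2)) :
    g = 1 ∨ g = Multiplicative.ofAdd 1 := by
  revert g; decide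

/-- The action of `ℤ/2` on the free group `F(x,y,z)` in which the nontrivial element acts
by inverting each generator. -/
def act : Multiplicative (ZMod 2) →* MulAut (FreeGroup (Fin 3)) where
  toFun g := if g = 1 then 1 else invAut
  map_one' := if_pos rfl
  map_mul' g h := by
    have hsq : invAut * invAut = 1 := by
      ext w
      exact invEnd_invEnd w
    have h2 : (Multiplicative.ofAdd (1 : ZMod 2)) * Multiplicative.ofAdd 1 = 1 := by decide
    rcases zmod2_cases g with hg | hg <;> rcases zmod2_cases h with hh | hh <;>
      subst hg <;> subst hh <;> simp [hsq, h2]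

/-- The group `B = F(x,y,z) ⋊ ℤ/2`. -/
abbrev B : Type := FreeGroup (Fin 3) ⋊[act] Multiplicative (ZMod 2)

/-- The relators `a², b², c²` of the free product `A = ℤ/2 * ℤ/2 * ℤ/2`. -/
def relsA : Set (FreeGroup (Fin 3)) :=
  {FreeGroup.of 0 ^ 2, FreeGroup.of 1 ^ 2, FreeGroup.of 2 ^ 2}

/-- The group `A = ⟨a,b,c | a² = b² = c² = 1⟩`. -/
abbrev A : Type := PresentedGroup relsA

/-- The generator `a` of `A`. -/
def pa : A := PresentedGroup.of (rels := relsA) 0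
/-- The generator `b` of `A`. -/
def pb : A := PresentedGroup.of (rels := relsA) 1
/-- The generator `c` of `A`. -/
def pc : A := PresentedGroup.of (rels := relsA) 2

/-- The homomorphism `j_A : F(x,y,z) → A`, `x ↦ abc`, `y ↦ bca`, `z ↦ cab`. -/
def jA : FreeGroup (Fin 3) →* A :=
  FreeGroup.lift fun i => ![pa * pb * pc, pb * pc * pa, pc * pa * pb] i

/-- The inclusion `j_B : F(x,y,z) → B` of the normal factor of the semidirect product. -/
def jB : FreeGroup (Fin 3) →* B := SemidirectProduct.inl

/-- The two-element family of groups `A` (at `true`) and `B` (at `false`). -/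
abbrev Gfam : Bool → Type := fun b => bif b then A else B

instance (b : Bool) : Group (Gfam b) := by
  cases b <;> dsimp [Gfam] <;> infer_instance

/-- The family of homomorphisms out of `F(x,y,z)` along which the pushout is taken. -/
def φfam : ∀ b : Bool, FreeGroup (Fin 3) →* Gfam b
  | true => jA
  | false => jB

/-!
Both groups are generated by `a, b, c, d`. In the pushout, `B` is generated by `d` and by
`j_B(F) = j_A(F) ⊆ A`, where `x, y, z` become `abc, bca, cab`. Given `d² = 1`, the relation
`d w d⁻¹ = w⁻¹` of `B` is equivalent to `(w d)² = 1`, so for `w = abc, bca, cab` the relations of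
`B` are exactly the relators `(abcd)², (bcad)², (cabd)²` of `G_4^3`. Hence sending generators to
generators defines mutually inverse homomorphisms.
-/

theorem mul_sq_eq_one_iff_conj_eq_inv {G : Type*} [Group G] {u t : G} (ht : t ^ 2 = 1) :
    (u * t) ^ 2 = 1 ↔ t * u * t⁻¹ = u⁻¹ := by
  rw [inv_eq_of_mul_eq_one_right (pow_two t ▸ ht), eq_inv_iff_mul_eq_one, pow_two, mul_assoc,
    mul_eq_one_comm]
  simp only [mul_assoc]

theorem PresentedGroup.lift_of_eq_one_of_mem {α : Type*} {rels : Set (FreeGroup α)}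
    {r : FreeGroup α} (hr : r ∈ rels) :
    FreeGroup.lift (PresentedGroup.of (rels := rels)) r = 1 := by
  rw [show FreeGroup.lift PresentedGroup.of = PresentedGroup.mk rels from
    FreeGroup.ext_hom _ _ fun _ => rfl]
  exact PresentedGroup.one_of_mem hr

theorem ofAdd_one_sq_zmod2 : Multiplicative.ofAdd (1 : ZMod 2) ^ 2 = 1 := by decide

def zmod2Lift {G : Type*} [Group G] (t : G) (ht : t ^ 2 = 1) : Multiplicative (ZMod 2) →* G where
  toFun g := if g = 1 then 1 else t
  map_one' := if_pos rfl
  map_mul' g h := by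
    rcases zmod2_cases g with rfl | rfl <;> rcases zmod2_cases h with rfl | rfl <;>
      simp [← pow_two, ofAdd_one_sq_zmod2, ht]

@[simp]
theorem zmod2Lift_ofAdd_one {G : Type*} [Group G] (t : G) (ht : t ^ 2 = 1) :
    zmod2Lift t ht (Multiplicative.ofAdd 1) = t := by
  simp [zmod2Lift]

theorem act_ofAdd_one_of (i : Fin 3) :
    act (Multiplicative.ofAdd 1) (FreeGroup.of i) = (FreeGroup.of i)⁻¹ := by
  have hd : Multiplicative.ofAdd (1 : ZMod 2) ≠ 1 := by decide
  simp [act, hd, invAut, invEnd]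

theorem lift_eq_one_of_mem_relsA_iff {K : Type*} [Group K] (a b c : K) :
    (∀ r ∈ relsA, FreeGroup.lift ![a, b, c] r = 1) ↔
      a ^ 2 = 1 ∧ b ^ 2 = 1 ∧ c ^ 2 = 1 := by
  simp [relsA]

theorem lift_eq_one_of_mem_rels43_iff {K : Type*} [Group K] (a b c d : K) :
    (∀ r ∈ rels43, FreeGroup.lift ![a, b, c, d] r = 1) ↔
      a ^ 2 = 1 ∧ b ^ 2 = 1 ∧ c ^ 2 = 1 ∧ d ^ 2 = 1 ∧
        (a * b * c * d) ^ 2 = 1 ∧ (b * c * a * d) ^ 2 = 1 ∧ (c * a * b * d) ^ 2 = 1 := by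
  simp [rels43, x]

theorem A.relations : pa ^ 2 = 1 ∧ pb ^ 2 = 1 ∧ pc ^ 2 = 1 := by
  have hgens : ![pa, pb, pc] = PresentedGroup.of := by ext i; fin_cases i <;> rfl
  exact (lift_eq_one_of_mem_relsA_iff pa pb pc).1 fun _ hr =>
    hgens ▸ PresentedGroup.lift_of_eq_one_of_mem hr

theorem G43.relations :
    ga ^ 2 = 1 ∧ gb ^ 2 = 1 ∧ gc ^ 2 = 1 ∧ gd ^ 2 = 1 ∧
      (ga * gb * gc * gd) ^ 2 = 1 ∧ (gb * gc * ga * gd) ^ 2 = 1 ∧ (gc * ga * gb * gd) ^ 2 = 1 := by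
  have hgens : ![ga, gb, gc, gd] = PresentedGroup.of := by ext i; fin_cases i <;> rfl
  exact (lift_eq_one_of_mem_rels43_iff ga gb gc gd).1 fun _ hr =>
    hgens ▸ PresentedGroup.lift_of_eq_one_of_mem hr

def A.toG43 : A →* G43 :=
  PresentedGroup.toGroup (f := ![ga, gb, gc]) <| by
    obtain ⟨ha, hb, hc, -⟩ := G43.relations
    exact (lift_eq_one_of_mem_relsA_iff ga gb gc).2 ⟨ha, hb, hc⟩

theorem G43.gd_conj_toG43_jA_of (i : Fin 3) :
    gd * A.toG43 (jA (.of i)) * gd⁻¹ = (A.toG43 (jA (.of i)))⁻¹ := by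
  obtain ⟨-, -, -, hd, habc, hbca, hcab⟩ := G43.relations
  refine (mul_sq_eq_one_iff_conj_eq_inv hd).1 ?_
  fin_cases i <;> simpa [jA, A.toG43, pa, pb, pc]

def B.toG43 : B →* G43 :=
  SemidirectProduct.lift (A.toG43.comp jA) (zmod2Lift gd G43.relations.2.2.2.1) <| by
    intro g
    rcases zmod2_cases g with rfl | rfl
    · ext; simp
    · refine FreeGroup.ext_hom _ _ fun i => ?_
      simp only [MonoidHom.comp_apply, MulEquiv.coe_toMonoidHom, MulAut.conj_apply,
        zmod2Lift_ofAdd_one, act_ofAdd_one_of, map_inv]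
      exact (G43.gd_conj_toG43_jA_of i).symm

def ofA : A →* Monoid.PushoutI φfam := Monoid.PushoutI.of (φ := φfam) true

def ofB : B →* Monoid.PushoutI φfam := Monoid.PushoutI.of (φ := φfam) false

def B.d : B := SemidirectProduct.inr (Multiplicative.ofAdd 1)

theorem ofA_comp_jA : ofA.comp jA = ofB.comp jB :=
  (Monoid.PushoutI.of_comp_eq_base (φ := φfam) true).trans
    (Monoid.PushoutI.of_comp_eq_base (φ := φfam) false).symm

theorem B.d_sq : B.d ^ 2 = 1 := by
  rw [B.d, ← map_pow, ofAdd_one_sq_zmod2, map_one]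

theorem B.jB_of_mul_d_sq (i : Fin 3) : (jB (.of i) * B.d) ^ 2 = 1 := by
  rw [mul_sq_eq_one_iff_conj_eq_inv B.d_sq, B.d, jB, ← map_inv, ← SemidirectProduct.inl_aut,
    act_ofAdd_one_of, map_inv]

def G43.toPushout : G43 →* Monoid.PushoutI φfam :=
  PresentedGroup.toGroup (f := ![ofA pa, ofA pb, ofA pc, ofB B.d]) <| by
    obtain ⟨ha, hb, hc⟩ := A.relations
    have hF (i : Fin 3) : (ofA (jA (.of i)) * ofB B.d) ^ 2 = 1 := by
      rw [← MonoidHom.comp_apply ofA, ofA_comp_jA, MonoidHom.comp_apply, ← map_mul, ← map_pow,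
        B.jB_of_mul_d_sq, map_one]
    refine (lift_eq_one_of_mem_rels43_iff _ _ _ _).2 ⟨?_, ?_, ?_, ?_, ?_, ?_, ?_⟩
    · rw [← map_pow, ha, map_one]
    · rw [← map_pow, hb, map_one]
    · rw [← map_pow, hc, map_one]
    · rw [← map_pow, B.d_sq, map_one]
    · simpa [jA] using hF 0
    · simpa [jA] using hF 1
    · simpa [jA] using hF 2

theorem G43.toPushout_of (i : Fin 4) :
    G43.toPushout (.of i) = ![ofA pa, ofA pb, ofA pc, ofB B.d] i :=
  PresentedGroup.toGroup.of _

def G43.ofPushout : Monoid.PushoutI φfam →* G43 :=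
  Monoid.PushoutI.lift (fun | true => A.toG43 | false => B.toG43) (A.toG43.comp jA) <| by
    rintro (_ | _)
    exacts [SemidirectProduct.lift_comp_inl _ _ _, rfl]

theorem G43.ofPushout_comp_toPushout : G43.ofPushout.comp G43.toPushout = MonoidHom.id G43 := by
  ext i
  fin_cases i <;>
    simp [G43.toPushout_of, G43.ofPushout, ofA, ofB, B.d, B.toG43, A.toG43, pa, pb, pc, ga, gb, gc,
      gd]

theorem G43.toPushout_comp_ofPushout_comp_ofA :
    (G43.toPushout.comp G43.ofPushout).comp ofA = ofA := by
  ext i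
  fin_cases i <;> simp [G43.toPushout_of, G43.ofPushout, ofA, A.toG43, pa, pb, pc, ga, gb, gc]

theorem G43.toPushout_comp_ofPushout :
    G43.toPushout.comp G43.ofPushout = MonoidHom.id (Monoid.PushoutI φfam) := by
  ext (_ | _) : 1
  · refine SemidirectProduct.hom_ext ?_ ?_
    · change ((G43.toPushout.comp G43.ofPushout).comp ofB).comp jB =
        ((MonoidHom.id _).comp ofB).comp jB
      rw [MonoidHom.id_comp, MonoidHom.comp_assoc, ← ofA_comp_jA, ← MonoidHom.comp_assoc,
        G43.toPushout_comp_ofPushout_comp_ofA]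
    · refine MonoidHom.ext fun g => ?_
      rcases zmod2_cases g with rfl | rfl
      · simp
      · simp [G43.toPushout_of, G43.ofPushout, ofB, B.toG43, B.d, gd]
  · exact G43.toPushout_comp_ofPushout_comp_ofA

/-- `G_4^3` is isomorphic to the amalgamated free product `A *_F B`, i.e. the
pushout of `j_A : F(x,y,z) → A` and `j_B : F(x,y,z) → B`; the isomorphism sends the generators
`a, b, c` of `G_4^3` to the images of `a, b, c ∈ A` and the generator `d` of `G_4^3` to the
image of the nontrivial element `d ∈ ℤ/2 ⊂ B`. -/
theorem stmt_0 : ∃ e : G43 ≃* Monoid.PushoutI φfam,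
    e ga = Monoid.PushoutI.of (φ := φfam) true pa ∧
    e gb = Monoid.PushoutI.of (φ := φfam) true pb ∧
    e gc = Monoid.PushoutI.of (φ := φfam) true pc ∧
    e gd = Monoid.PushoutI.of (φ := φfam) false (SemidirectProduct.inr (Multiplicative.ofAdd 1)) :=
  ⟨G43.toPushout.toMulEquiv G43.ofPushout G43.ofPushout_comp_toPushout
      G43.toPushout_comp_ofPushout,
    G43.toPushout_of 0, G43.toPushout_of 1, G43.toPushout_of 2, G43.toPushout_of 3⟩
end

section
/- In the group G_4^3, the subgroup C generated by the three elements abc, bca, cab is a normal subgroup of G_4^3. -/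
/-! The generators are involutions. Conjugation by `a` swaps `abc` and `bca` and sends `cab` to
`acaba = (bca)⁻¹ (cab)⁻¹ (abc)⁻¹`; since `{abc, bca, cab}` is invariant under cyclically permuting
`a, b, c`, the same holds for `b` and `c`. The relator `(abcd)²` says that conjugation by the
involution `d` inverts `abc`, and likewise for `bca` and `cab`. So every generator normalizes `C`. -/

section Involutions

variable {G : Type*} [Group G]

theorem Subgroup.mem_normalizer_closure_of_mul_self {S : Set G} {g : G} (hg : g * g = 1)
    (h : ∀ s ∈ S, g * s * g⁻¹ ∈ Subgroup.closure S) :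
    g ∈ Subgroup.normalizer (Subgroup.closure S : Set G) := by
  have hle : (Subgroup.closure S).map (MulAut.conj g).toMonoidHom ≤ Subgroup.closure S := by
    rw [MonoidHom.map_closure, Subgroup.closure_le]
    rintro _ ⟨s, hs, rfl⟩
    exact h s hs
  have hconj : ∀ k ∈ Subgroup.closure S, g * k * g⁻¹ ∈ Subgroup.closure S :=
    fun k hk => hle (Subgroup.mem_map_of_mem _ hk)
  refine Subgroup.mem_normalizer_iff.mpr fun k => ⟨hconj k, fun hk => ?_⟩
  simpa [mul_assoc, inv_eq_of_mul_eq_one_right hg, ← mul_assoc g g, hg] using hconj _ hk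

theorem conj_eq_inv_of_mul_self {s d : G} (hd : d * d = 1) (hsd : s * d * (s * d) = 1) :
    d * s * d⁻¹ = s⁻¹ := by
  rw [inv_eq_of_mul_eq_one_right hd]
  exact eq_inv_of_mul_eq_one_right (by simpa only [mul_assoc] using hsd)

theorem Subgroup.mem_normalizer_closure_of_conj_eq_inv {S : Set G} {g : G} (hg : g * g = 1)
    (h : ∀ s ∈ S, g * s * g⁻¹ = s⁻¹) :
    g ∈ Subgroup.normalizer (Subgroup.closure S : Set G) :=
  Subgroup.mem_normalizer_closure_of_mul_self hg fun s hs =>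
    h s hs ▸ inv_mem (Subgroup.subset_closure hs)

end Involutions

section CyclicProducts

variable {G : Type*} [Group G]

def cyclicProducts (a b c : G) : Set G := {a * b * c, b * c * a, c * a * b}

theorem cyclicProducts_rotate (a b c : G) : cyclicProducts b c a = cyclicProducts a b c := by
  ext
  simp only [cyclicProducts, Set.mem_insert_iff, Set.mem_singleton_iff]
  tauto

theorem mem_normalizer_closure_cyclicProducts {a b c : G} (ha : a * a = 1) (hb : b * b = 1)
    (hc : c * c = 1) :
    a ∈ Subgroup.normalizer (Subgroup.closure (cyclicProducts a b c) : Set G) := by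
  have ha' : a⁻¹ = a := inv_eq_of_mul_eq_one_right ha
  have hb' : b⁻¹ = b := inv_eq_of_mul_eq_one_right hb
  have hc' : c⁻¹ = c := inv_eq_of_mul_eq_one_right hc
  have mem {s : G} (hs : s ∈ cyclicProducts a b c) : s ∈ Subgroup.closure (cyclicProducts a b c) :=
    Subgroup.subset_closure hs
  refine Subgroup.mem_normalizer_closure_of_mul_self ha ?_
  rintro s (rfl | rfl | rfl)
  · rw [show a * (a * b * c) * a⁻¹ = b * c * a by simp [ha', ← mul_assoc, ha]]
    exact mem (by simp [cyclicProducts])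
  · rw [show a * (b * c * a) * a⁻¹ = a * b * c by group]
    exact mem (by simp [cyclicProducts])
  · rw [show a * (c * a * b) * a⁻¹ = (b * c * a)⁻¹ * (c * a * b)⁻¹ * (a * b * c)⁻¹ by
      simp [ha', hb', hc', mul_assoc, ← mul_assoc b b, ← mul_assoc c c, hb, hc]]
    exact mul_mem (mul_mem (inv_mem (mem (by simp [cyclicProducts])))
      (inv_mem (mem (by simp [cyclicProducts])))) (inv_mem (mem (by simp [cyclicProducts])))

end CyclicProducts

theorem PresentedGroup.mk_mul_self_eq_one {α : Type*} {rels : Set (FreeGroup α)}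
    {r : FreeGroup α} (hr : r ^ 2 ∈ rels) :
    PresentedGroup.mk rels r * PresentedGroup.mk rels r = 1 := by
  rw [← map_mul, ← sq]
  exact PresentedGroup.one_of_mem hr

/-- In the group `G_4^3`, the subgroup `C` generated by the three elements
`abc, bca, cab` is a normal subgroup of `G_4^3`. -/
theorem stmt_2 :
    (Subgroup.closure {ga * gb * gc, gb * gc * ga, gc * ga * gb} : Subgroup G43).Normal := by
  have ha : ga * ga = 1 := PresentedGroup.mk_mul_self_eq_one (r := x 0) (by simp [rels43])
  have hb : gb * gb = 1 := PresentedGroup.mk_mul_self_eq_one (r := x 1) (by simp [rels43])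
  have hc : gc * gc = 1 := PresentedGroup.mk_mul_self_eq_one (r := x 2) (by simp [rels43])
  have hd : gd * gd = 1 := PresentedGroup.mk_mul_self_eq_one (r := x 3) (by simp [rels43])
  have habcd : ga * gb * gc * gd * (ga * gb * gc * gd) = 1 :=
    PresentedGroup.mk_mul_self_eq_one (r := x 0 * x 1 * x 2 * x 3) (by simp [rels43])
  have hbcad : gb * gc * ga * gd * (gb * gc * ga * gd) = 1 :=
    PresentedGroup.mk_mul_self_eq_one (r := x 1 * x 2 * x 0 * x 3) (by simp [rels43])
  have hcabd : gc * ga * gb * gd * (gc * ga * gb * gd) = 1 :=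
    PresentedGroup.mk_mul_self_eq_one (r := x 2 * x 0 * x 1 * x 3) (by simp [rels43])
  change (Subgroup.closure (cyclicProducts ga gb gc)).Normal
  rw [← Subgroup.normalizer_eq_top_iff, eq_top_iff, ← PresentedGroup.closure_range_of,
    Subgroup.closure_le]
  rintro _ ⟨i, rfl⟩
  fin_cases i
  · exact mem_normalizer_closure_cyclicProducts ha hb hc
  · rw [← cyclicProducts_rotate]
    exact mem_normalizer_closure_cyclicProducts hb hc ha
  · rw [← cyclicProducts_rotate, ← cyclicProducts_rotate]
    exact mem_normalizer_closure_cyclicProducts hc ha hb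
  · refine Subgroup.mem_normalizer_closure_of_conj_eq_inv hd ?_
    rintro s (rfl | rfl | rfl)
    · exact conj_eq_inv_of_mul_self hd habcd
    · exact conj_eq_inv_of_mul_self hd hbcad
    · exact conj_eq_inv_of_mul_self hd hcabd
end

section
/- In the free product A = ⟨a,b,c | a² = b² = c² = 1⟩ of three copies of ℤ/2, the elements abc, bca, cab freely generate a free subgroup of rank 3; that is, the homomorphism from the free group on three generators x, y, z to A defined by x ↦ abc, y ↦ bca, z ↦ cab is injective. -/
def ReducedWord (α : Type*) : Type _ := {l : List α // l.IsChain (· ≠ ·)}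

namespace ReducedWord

variable {α : Type*} {i j k : α} {w : ReducedWord α}

theorem head_tail_ne_of_head_eq (h : w.val.head? = some i) : w.val.tail.head? ≠ some i := by
  intro h'
  have hw := w.prop
  rw [← List.cons_head?_tail h, ← List.cons_head?_tail h'] at hw
  exact (List.isChain_cons_cons.1 hw).1 rfl

def startingWith (l : List α) : Set (ReducedWord α) := {w | l <+: w.val}

theorem disjoint_startingWith {l₁ l₂ : List α} (hlen : l₁.length = l₂.length) (hne : l₁ ≠ l₂) :
    Disjoint (startingWith l₁) (startingWith l₂) :=
  Set.disjoint_left.2 fun _ h₁ h₂ =>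
    hne ((List.prefix_of_prefix_length_le h₁ h₂ hlen.le).eq_of_length hlen)

variable [DecidableEq α]

/-- Left multiplication by the generator `i` on the normal forms of a free product of copies
of `ℤ/2`. -/
def toggle (i : α) (w : ReducedWord α) : ReducedWord α :=
  if h : w.val.head? = some i then ⟨w.val.tail, w.prop.tail⟩
  else ⟨i :: w.val, List.isChain_cons.2 ⟨fun _ hy hiy => h (hiy ▸ hy), w.prop⟩⟩

theorem toggle_val_of_head_eq (h : w.val.head? = some i) : (toggle i w).val = w.val.tail := by
  simp [toggle, h]

theorem toggle_val_of_head_ne (h : w.val.head? ≠ some i) : (toggle i w).val = i :: w.val := by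
  simp [toggle, h]

theorem toggle_involutive (i : α) : Function.Involutive (toggle i) := by
  intro w
  apply Subtype.ext
  by_cases h : w.val.head? = some i
  · rw [toggle_val_of_head_ne (by rw [toggle_val_of_head_eq h]; exact head_tail_ne_of_head_eq h),
      toggle_val_of_head_eq h, List.cons_head?_tail h]
  · rw [toggle_val_of_head_eq (by rw [toggle_val_of_head_ne h]; rfl), toggle_val_of_head_ne h,
      List.tail_cons]

def togglePerm (i : α) : Equiv.Perm (ReducedWord α) := (toggle_involutive i).toPerm

@[simp]
theorem togglePerm_apply (i : α) (w : ReducedWord α) : togglePerm i w = toggle i w := rfl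

@[simp]
theorem togglePerm_inv (i : α) : (togglePerm i)⁻¹ = togglePerm i :=
  (toggle_involutive i).toPerm_symm

theorem togglePerm_sq (i : α) : togglePerm i ^ 2 = 1 := by
  rw [sq, ← inv_mul_cancel (togglePerm i), togglePerm_inv]

theorem toggle_toggle_val (hji : j ≠ i) (h : w.val.head? ≠ some j) :
    (toggle i (toggle j w)).val = i :: j :: w.val := by
  rw [toggle_val_of_head_ne (by simpa [toggle_val_of_head_ne h] using hji),
    toggle_val_of_head_ne h]

theorem head_toggle_ne (hkj : k ≠ j) (h : ¬ [k, j] <+: w.val) :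
    (toggle k w).val.head? ≠ some j := by
  by_cases hk : w.val.head? = some k
  · rw [toggle_val_of_head_eq hk]
    intro hj
    rw [← List.cons_head?_tail hk, ← List.cons_head?_tail hj] at h
    exact h (List.prefix_append [k, j] _)
  · simpa [toggle_val_of_head_ne hk] using hkj

theorem prefix_toggle_toggle_toggle (hji : j ≠ i) (hkj : k ≠ j) (h : ¬ [k, j] <+: w.val) :
    [i, j] <+: (toggle i (toggle j (toggle k w))).val := by
  rw [toggle_toggle_val hji (head_toggle_ne hkj h)]
  exact List.prefix_append [i, j] _

end ReducedWord

open ReducedWord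

def wordAction : A →* Equiv.Perm (ReducedWord (Fin 3)) :=
  PresentedGroup.toGroup (f := togglePerm) <| by
    rintro r (rfl | rfl | rfl) <;> simp only [map_pow, FreeGroup.lift_apply_of, togglePerm_sq]

instance : MulAction A (ReducedWord (Fin 3)) := MulAction.compHom _ wordAction

theorem smul_eq_wordAction (g : A) (w : ReducedWord (Fin 3)) : g • w = wordAction g w := rfl

theorem wordAction_of (i : Fin 3) : wordAction (PresentedGroup.of i) = togglePerm i :=
  PresentedGroup.toGroup.of _

theorem jA_of (n : Fin 3) : jA (FreeGroup.of n) =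
    PresentedGroup.of n * PresentedGroup.of (n + 1) * PresentedGroup.of (n + 2) := by
  fin_cases n <;> rfl

theorem jA_of_smul (n : Fin 3) (w : ReducedWord (Fin 3)) :
    jA (FreeGroup.of n) • w = toggle n (toggle (n + 1) (toggle (n + 2) w)) := by
  simp [smul_eq_wordAction, jA_of, wordAction_of]

theorem jA_of_inv_smul (n : Fin 3) (w : ReducedWord (Fin 3)) :
    (jA (FreeGroup.of n))⁻¹ • w = toggle (n + 2) (toggle (n + 1) (toggle n w)) := by
  simp [smul_eq_wordAction, jA_of, wordAction_of]

/-- In the free product `A = ⟨a,b,c | a² = b² = c² = 1⟩` of three copies of `ℤ/2`,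
the elements `abc, bca, cab` freely generate a free subgroup of rank 3: the homomorphism from
the free group on three generators `x, y, z` to `A` defined by `x ↦ abc`, `y ↦ bca`, `z ↦ cab`
is injective. -/
theorem stmt_3 : Function.Injective jA := by
  rw [← FreeGroup.lift.apply_symm_apply jA]
  apply FreeGroup.injective_lift_of_ping_pong _
    (fun n => startingWith [n, n + 1]) (fun n => startingWith [n + 2, n + 1])
  · exact fun n => ⟨⟨[n, n + 1], by simp⟩, List.prefix_refl _⟩
  · exact fun m n hmn => disjoint_startingWith rfl (by simpa using hmn)
  · exact fun m n hmn => disjoint_startingWith rfl (by simpa using hmn)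
  · exact fun m n => disjoint_startingWith rfl (by revert m n; decide)
  · rintro n _ ⟨w, hw, rfl⟩
    simp only [FreeGroup.lift_symm_apply, Function.comp_apply, jA_of_smul]
    exact prefix_toggle_toggle_toggle (by simp) (by simp) hw
  · rintro n _ ⟨w, hw, rfl⟩
    simp only [Pi.inv_apply, FreeGroup.lift_symm_apply, Function.comp_apply, jA_of_inv_smul]
    exact prefix_toggle_toggle_toggle (by simp) (by simp) hw
end

section
/- The quotient of G_4^3 by the normal closure of the set {abc, bca, cab} is isomorphic to the free product (ℤ/2 × ℤ/2) * ℤ/2, by an isomorphism under which the classes of a and b generate the first factor ℤ/2 × ℤ/2 (with class of c equal to the class of ab) and the class of d generates the second factor ℤ/2. -/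
/-- The normal closure of `{abc, bca, cab}` in `G_4^3`. -/
def C43 : Subgroup G43 := Subgroup.normalClosure {ga * gb * gc, gb * gc * ga, gc * ga * gb}

instance : C43.Normal := Subgroup.normalClosure_normal

open Multiplicative

section ZModPowHom

variable {G : Type*} [Group G] {n m : ℕ}

def zmodPowHom (g : G) (hg : g ^ n = 1) : Multiplicative (ZMod n) →* G :=
  AddMonoidHom.toMultiplicativeLeft <|
    ZMod.lift n ⟨zmultiplesHom (Additive G) (Additive.ofMul g), by
      simp [← ofMul_pow, hg]⟩

@[simp]
theorem zmodPowHom_ofAdd_intCast (g : G) (hg : g ^ n = 1) (k : ℤ) :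
    zmodPowHom g hg (ofAdd (k : ZMod n)) = g ^ k := by
  simp [zmodPowHom]

@[simp]
theorem zmodPowHom_ofAdd_one (g : G) (hg : g ^ n = 1) : zmodPowHom g hg (ofAdd 1) = g := by
  simpa using zmodPowHom_ofAdd_intCast g hg 1

theorem MonoidHom.ext_zmod {f f' : Multiplicative (ZMod n) →* G}
    (h : f (ofAdd 1) = f' (ofAdd 1)) : f = f' := by
  refine MonoidHom.ext fun x => ?_
  obtain ⟨k, hk⟩ := ZMod.intCast_surjective (toAdd x)
  rw [← ofAdd_toAdd x, ← hk, ← zsmul_one, ofAdd_zsmul, map_zpow, map_zpow, h]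

theorem commute_zmodPowHom {g h : G} (hg : g ^ n = 1) (hh : h ^ m = 1) (hgh : Commute g h)
    (x : Multiplicative (ZMod n)) (y : Multiplicative (ZMod m)) :
    Commute (zmodPowHom g hg x) (zmodPowHom h hh y) := by
  obtain ⟨k, hk⟩ := ZMod.intCast_surjective (toAdd x)
  obtain ⟨l, hl⟩ := ZMod.intCast_surjective (toAdd y)
  rw [← ofAdd_toAdd x, ← ofAdd_toAdd y, ← hk, ← hl, zmodPowHom_ofAdd_intCast,
    zmodPowHom_ofAdd_intCast]
  exact hgh.zpow_zpow k l

def zmodProdPowHom {g h : G} (hg : g ^ n = 1) (hh : h ^ m = 1) (hgh : Commute g h) :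
    Multiplicative (ZMod n × ZMod m) →* G :=
  ((zmodPowHom g hg).noncommCoprod (zmodPowHom h hh) (commute_zmodPowHom hg hh hgh)).comp
    (MulEquiv.prodMultiplicative _ _).toMonoidHom

@[simp]
theorem zmodProdPowHom_ofAdd {g h : G} (hg : g ^ n = 1) (hh : h ^ m = 1) (hgh : Commute g h)
    (x : ZMod n × ZMod m) :
    zmodProdPowHom hg hh hgh (ofAdd x) =
      zmodPowHom g hg (ofAdd x.1) * zmodPowHom h hh (ofAdd x.2) :=
  rfl

theorem MonoidHom.ext_zmod_prod {f f' : Multiplicative (ZMod n × ZMod m) →* G}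
    (h₁ : f (ofAdd (1, 0)) = f' (ofAdd (1, 0))) (h₂ : f (ofAdd (0, 1)) = f' (ofAdd (0, 1))) :
    f = f' := by
  refine MonoidHom.ext fun x => ?_
  obtain ⟨k, hk⟩ := ZMod.intCast_surjective (toAdd x).1
  obtain ⟨l, hl⟩ := ZMod.intCast_surjective (toAdd x).2
  have hx : x = ofAdd (1, 0) ^ k * ofAdd (0, 1) ^ l := by
    rw [← ofAdd_zsmul, ← ofAdd_zsmul, ← ofAdd_add]
    ext <;> simp [hk, hl]
  rw [hx, map_mul, map_mul, map_zpow, map_zpow, map_zpow, map_zpow, h₁, h₂]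

end ZModPowHom

section Involutions

variable {G : Type*} [Group G] {a b c : G}

theorem inv_eq_self_of_sq_eq_one (ha : a ^ 2 = 1) : a⁻¹ = a :=
  inv_eq_of_mul_eq_one_left (by rw [← sq, ha])

theorem Commute.of_sq_eq_one (ha : a ^ 2 = 1) (hb : b ^ 2 = 1) (hab : (a * b) ^ 2 = 1) :
    Commute a b := by
  calc a * b = (a * b)⁻¹ := (inv_eq_self_of_sq_eq_one hab).symm
    _ = b * a := by rw [mul_inv_rev, inv_eq_self_of_sq_eq_one ha, inv_eq_self_of_sq_eq_one hb]

theorem mul_eq_of_mul_mul_eq_one (hc : c ^ 2 = 1) (habc : a * b * c = 1) : a * b = c := by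
  rw [mul_eq_one_iff_eq_inv.mp habc, inv_eq_self_of_sq_eq_one hc]

theorem mul_mul_eq_one_rotate (h : a * b * c = 1) : b * c * a = 1 := by
  rwa [mul_assoc, mul_eq_one_comm] at h

end Involutions

section UniversalProperty

variable {G : Type*} [Group G]

theorem lift_eq_one_of_mem_rels43 {f : Fin 4 → G} (hf : ∀ i, f i ^ 2 = 1)
    (habc : f 0 * f 1 * f 2 = 1) : ∀ r ∈ rels43, FreeGroup.lift f r = 1 := by
  have hbca := mul_mul_eq_one_rotate habc
  have hcab := mul_mul_eq_one_rotate hbca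
  simp only [rels43, Set.mem_insert_iff, Set.mem_singleton_iff]
  rintro r (rfl | rfl | rfl | rfl | rfl | rfl | rfl) <;>
    simp [x, hf, habc, hbca, hcab]

theorem C43_le_ker_toGroup {f : Fin 4 → G} (hf : ∀ i, f i ^ 2 = 1)
    (habc : f 0 * f 1 * f 2 = 1) :
    C43 ≤ (PresentedGroup.toGroup (lift_eq_one_of_mem_rels43 hf habc)).ker := by
  have hbca := mul_mul_eq_one_rotate habc
  refine Subgroup.normalClosure_le_normal ?_
  simp [Set.insert_subset_iff, ga, gb, gc, habc, hbca, mul_mul_eq_one_rotate hbca]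

def liftQuot {f : Fin 4 → G} (hf : ∀ i, f i ^ 2 = 1) (habc : f 0 * f 1 * f 2 = 1) :
    G43 ⧸ C43 →* G :=
  QuotientGroup.lift C43 _ (C43_le_ker_toGroup hf habc)

theorem liftQuot_mk_of {f : Fin 4 → G} (hf : ∀ i, f i ^ 2 = 1) (habc : f 0 * f 1 * f 2 = 1)
    (i : Fin 4) : liftQuot hf habc (PresentedGroup.of i : G43) = f i := by
  rw [liftQuot, QuotientGroup.lift_mk, PresentedGroup.toGroup.of]

end UniversalProperty

theorem of_sq_eq_one (i : Fin 4) : (PresentedGroup.of i : G43) ^ 2 = 1 :=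
  PresentedGroup.one_of_mem (by fin_cases i <;> simp [rels43, x])

theorem mk_of_sq_eq_one (i : Fin 4) : ((PresentedGroup.of i : G43) : G43 ⧸ C43) ^ 2 = 1 := by
  rw [← QuotientGroup.mk_pow, of_sq_eq_one, QuotientGroup.mk_one]

theorem mk_of_zero_mul_mk_of_one :
    ((PresentedGroup.of 0 : G43) : G43 ⧸ C43) * (PresentedGroup.of 1 : G43) =
      (PresentedGroup.of 2 : G43) := by
  refine mul_eq_of_mul_mul_eq_one (mk_of_sq_eq_one 2) ?_
  rw [← QuotientGroup.mk_mul, ← QuotientGroup.mk_mul, QuotientGroup.eq_one_iff]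
  exact Subgroup.subset_normalClosure (by simp [ga, gb, gc])

theorem commute_mk_of_zero_mk_of_one :
    Commute ((PresentedGroup.of 0 : G43) : G43 ⧸ C43) (PresentedGroup.of 1 : G43) :=
  .of_sq_eq_one (mk_of_sq_eq_one 0) (mk_of_sq_eq_one 1)
    (mk_of_zero_mul_mk_of_one ▸ mk_of_sq_eq_one 2)

open Monoid.Coprod in
def quotToCoprod :
    G43 ⧸ C43 →* Monoid.Coprod (Multiplicative (ZMod 2 × ZMod 2)) (Multiplicative (ZMod 2)) :=
  liftQuot (f := ![inl (ofAdd (1, 0)), inl (ofAdd (0, 1)), inl (ofAdd (1, 1)), inr (ofAdd 1)])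
    (by
      have hsq₁ : ∀ y : Multiplicative (ZMod 2 × ZMod 2), y ^ 2 = 1 := by decide
      have hsq₂ : ∀ y : Multiplicative (ZMod 2), y ^ 2 = 1 := by decide
      intro i
      fin_cases i <;> simp [← map_pow, hsq₁, hsq₂])
    (by simp [← map_mul, map_eq_one_iff _ inl_injective]; decide)

def coprodToQuot :
    Monoid.Coprod (Multiplicative (ZMod 2 × ZMod 2)) (Multiplicative (ZMod 2)) →* G43 ⧸ C43 :=
  Monoid.Coprod.lift
    (zmodProdPowHom (mk_of_sq_eq_one 0) (mk_of_sq_eq_one 1) commute_mk_of_zero_mk_of_one)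
    (zmodPowHom _ (mk_of_sq_eq_one 3))

theorem quotToCoprod_mk_of (i : Fin 4) : quotToCoprod (PresentedGroup.of i : G43) =
    ![.inl (ofAdd (1, 0)), .inl (ofAdd (0, 1)), .inl (ofAdd (1, 1)), .inr (ofAdd 1)] i :=
  liftQuot_mk_of _ _ i

theorem coprodToQuot_comp_quotToCoprod : coprodToQuot.comp quotToCoprod = .id _ := by
  refine QuotientGroup.monoidHom_ext _ (PresentedGroup.ext fun i => ?_)
  fin_cases i <;> simp [quotToCoprod_mk_of, coprodToQuot, mk_of_zero_mul_mk_of_one]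

theorem quotToCoprod_comp_coprodToQuot : quotToCoprod.comp coprodToQuot = .id _ := by
  refine Monoid.Coprod.hom_ext (MonoidHom.ext_zmod_prod ?_ ?_) (MonoidHom.ext_zmod ?_) <;>
    simp [coprodToQuot, quotToCoprod_mk_of]

/-- The quotient of `G_4^3` by the normal closure of `{abc, bca, cab}` is
isomorphic to the free product `(ℤ/2 × ℤ/2) * ℤ/2`, by an isomorphism under which the classes
of `a` and `b` generate the first factor `ℤ/2 × ℤ/2` (with the class of `c` equal to the class
of `ab`) and the class of `d` generates the second factor `ℤ/2`. -/
theorem stmt_4 : ∃ e : (G43 ⧸ C43) ≃*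
      Monoid.Coprod (Multiplicative (ZMod 2 × ZMod 2)) (Multiplicative (ZMod 2)),
    e (QuotientGroup.mk ga) = Monoid.Coprod.inl (Multiplicative.ofAdd (1, 0)) ∧
    e (QuotientGroup.mk gb) = Monoid.Coprod.inl (Multiplicative.ofAdd (0, 1)) ∧
    e (QuotientGroup.mk gc) = Monoid.Coprod.inl (Multiplicative.ofAdd (1, 1)) ∧
    e (QuotientGroup.mk gd) = Monoid.Coprod.inr (Multiplicative.ofAdd 1) :=
  ⟨quotToCoprod.toMulEquiv coprodToQuot coprodToQuot_comp_quotToCoprod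
      quotToCoprod_comp_coprodToQuot,
    quotToCoprod_mk_of 0, quotToCoprod_mk_of 1, quotToCoprod_mk_of 2, quotToCoprod_mk_of 3⟩
end

section
/- Let F be the free group on a type S, let u, v ∈ F and let φ be an automorphism of F. Let F' be the free group on S ⊔ {z} (e.g. FreeGroup (Option S)), let ι : F → F' be the canonical (injective) homomorphism induced by the inclusion of generators, let z denote the extra generator of F', and let φ' : F' → F' be the homomorphism with φ'(ι(h)) = ι(φ(h)) for h ∈ F and φ'(z) = ι(u) z ι(u)⁻¹. Then u and v are φ-twisted conjugate (i.e. there exists g ∈ F with φ(g)⁻¹ u g = v) if and only if there exists g ∈ F such that the element ι(g)⁻¹ z ι(g) is a fixed point of the map h ↦ ι(v)⁻¹ φ'(h) ι(v); moreover in that case g is a valid twisted conjugating element, i.e. the same g satisfies φ(g)⁻¹ u g = v. -/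
namespace Stmt6Aux

variable {S : Type*}

/-- The permutation `(x, y) ↦ (x, y * x)`. -/
def tau : Equiv.Perm (FreeGroup S × FreeGroup S) where
  toFun p := (p.1, p.2 * p.1)
  invFun p := (p.1, p.2 * p.1⁻¹)
  left_inv p := by simp
  right_inv p := by simp

/-- Left multiplication on the first component, as a hom to permutations. -/
def rho : FreeGroup S →* Equiv.Perm (FreeGroup S × FreeGroup S) where
  toFun w := (Equiv.mulLeft w).prodCongr (Equiv.refl _)
  map_one' := by ext p <;> simp
  map_mul' a b := by ext p <;> simp [mul_assoc]

def theta : FreeGroup (Option S) →* Equiv.Perm (FreeGroup S × FreeGroup S) :=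
  FreeGroup.lift fun o => Option.elim o tau (fun s => rho (FreeGroup.of s))

lemma theta_map (w : FreeGroup S) :
    theta (FreeGroup.map some w) = rho w := by
  have : (theta (S := S)).comp (FreeGroup.map some) = rho := by
    apply FreeGroup.ext_hom
    intro a
    simp [theta, rho, FreeGroup.map.of]
  exact DFunLike.congr_fun this w

lemma key (a g : FreeGroup S)
    (h : (FreeGroup.map some a)⁻¹ * FreeGroup.of none * FreeGroup.map some a =
      (FreeGroup.map some g)⁻¹ * FreeGroup.of none * FreeGroup.map some g) : a = g := by
  set ι := FreeGroup.map (α := S) some with hι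
  have hw : FreeGroup.of none * (ι a * (ι g)⁻¹) = (ι a * (ι g)⁻¹) * FreeGroup.of none := by
    have := congrArg (fun x => ι a * x * (ι g)⁻¹) h
    simpa [mul_assoc] using this
  have hιw : ι a * (ι g)⁻¹ = ι (a * g⁻¹) := by simp
  rw [hιw] at hw
  have hth := congrArg theta hw
  have hz : theta (FreeGroup.of (none : Option S)) = tau := by simp [theta]
  rw [theta.map_mul, theta.map_mul, hz, theta_map] at hth
  have h11 := congrFun (congrArg (fun (e : Equiv.Perm (FreeGroup S × FreeGroup S)) =>
    (e : FreeGroup S × FreeGroup S → FreeGroup S × FreeGroup S)) hth) (1, 1)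
  simp only [Equiv.Perm.mul_apply, tau, rho, Equiv.coe_fn_mk, MonoidHom.coe_mk,
    OneHom.coe_mk, Equiv.prodCongr_apply, Equiv.coe_mulLeft, Equiv.coe_refl,
    Prod.map, mul_one, one_mul, id_eq, Prod.mk.injEq] at h11
  exact mul_inv_eq_one.mp h11.2

end Stmt6Aux

/-- Let `F` be the free group on a type `S`, let `u, v ∈ F`, let `φ` be an
automorphism of `F`, let `F'` be the free group on `S ⊔ {z}` (here `FreeGroup (Option S)` with
`z` the generator `of none`), let `ι : F → F'` be the canonical homomorphism induced by the
inclusion of generators, and let `φ' : F' → F'` be the homomorphism with `φ'(ι h) = ι (φ h)`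
for `h ∈ F` and `φ'(z) = ι(u) z ι(u)⁻¹`.  Then `u` and `v` are `φ`-twisted conjugate
(i.e. there is `g ∈ F` with `φ(g)⁻¹ u g = v`) if and only if there exists `g ∈ F` such that
`ι(g)⁻¹ z ι(g)` is a fixed point of the map `h ↦ ι(v)⁻¹ φ'(h) ι(v)`; moreover in that case `g`
is a valid twisted conjugating element, i.e. the same `g` satisfies `φ(g)⁻¹ u g = v`. -/
theorem stmt_6 {S : Type*} (u v : FreeGroup S) (φ : FreeGroup S ≃* FreeGroup S)
    (φ' : FreeGroup (Option S) →* FreeGroup (Option S))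
    (hφ'ι : ∀ h : FreeGroup S, φ' (FreeGroup.map some h) = FreeGroup.map some (φ h))
    (hφ'z : φ' (FreeGroup.of none) =
      FreeGroup.map some u * FreeGroup.of none * (FreeGroup.map some u)⁻¹) :
    ((∃ g : FreeGroup S, (φ g)⁻¹ * u * g = v) ↔
      (∃ g : FreeGroup S,
        (FreeGroup.map some v)⁻¹ *
            φ' ((FreeGroup.map some g)⁻¹ * FreeGroup.of none * FreeGroup.map some g) *
            FreeGroup.map some v =
          (FreeGroup.map some g)⁻¹ * FreeGroup.of none * FreeGroup.map some g)) ∧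
    (∀ g : FreeGroup S,
      (FreeGroup.map some v)⁻¹ *
          φ' ((FreeGroup.map some g)⁻¹ * FreeGroup.of none * FreeGroup.map some g) *
          FreeGroup.map some v =
        (FreeGroup.map some g)⁻¹ * FreeGroup.of none * FreeGroup.map some g →
      (φ g)⁻¹ * u * g = v) := by
  set ι := FreeGroup.map (α := S) some with hι
  -- rewrite the fixed-point equation in conjugate form
  have hcompute : ∀ g : FreeGroup S,
      (ι v)⁻¹ * φ' ((ι g)⁻¹ * FreeGroup.of none * ι g) * ι v =
        (ι (u⁻¹ * φ g * v))⁻¹ * FreeGroup.of none * ι (u⁻¹ * φ g * v) := by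
    intro g
    simp only [map_mul, map_inv, hφ'ι, hφ'z]
    group
  have main : ∀ g : FreeGroup S,
      ((ι v)⁻¹ * φ' ((ι g)⁻¹ * FreeGroup.of none * ι g) * ι v =
        (ι g)⁻¹ * FreeGroup.of none * ι g) ↔ (φ g)⁻¹ * u * g = v := by
    intro g
    rw [hcompute g]
    constructor
    · intro h
      have := Stmt6Aux.key _ _ h
      have h2 : u⁻¹ * (φ g) * v = g := this
      calc (φ g)⁻¹ * u * g = (φ g)⁻¹ * u * (u⁻¹ * φ g * v) := by rw [h2]
        _ = v := by group
    · intro h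
      have h2 : u⁻¹ * (φ g) * v = g := by
        rw [← h]; group
      rw [h2]
  constructor
  · constructor
    · rintro ⟨g, hg⟩; exact ⟨g, (main g).mpr hg⟩
    · rintro ⟨g, hg⟩; exact ⟨g, (main g).mp hg⟩
  · intro g hg; exact (main g).mp hg
end

section
/- Let k ≥ 2 and let w be a word in the generators b_1, …, b_{k+1} of G_{k+1}^k (a list over Fin (k+1)). For each position p of w at which the letter b_{k+1} occurs, define its index m_p : {1, …, k−1} → ℤ/2 by m_p(j) = (number of occurrences of b_j among the letters of w before position p) + (number of occurrences of b_k among the letters of w before position p) modulo 2. Let F_{k−1} be the free product of copies of ℤ/2 indexed by the functions {1, …, k−1} → ℤ/2, i.e. the presented group with one generator c_m for each function m : Fin (k−1) → ZMod 2 and relators the squares c_m², and let f(w) ∈ F_{k−1} be the product, over the occurrences of b_{k+1} in w taken in order, of the generators c_{m_p}. If f(w) = 1 in F_{k−1}, then the image of w in G_{k+1}^k belongs to the subgroup H_k. -/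
/-- The relators of the group `G_{k+1}^k`: the squares `b_i²` of all generators, together with
`(b_{σ(1)} b_{σ(2)} ⋯ b_{σ(k+1)})²` for every permutation `σ` of the `k+1` generators. -/
def relsG (k : ℕ) : Set (FreeGroup (Fin (k + 1))) :=
  (Set.range fun i : Fin (k + 1) => FreeGroup.of i ^ 2) ∪
    (Set.range fun σ : Equiv.Perm (Fin (k + 1)) =>
      ((List.ofFn fun j : Fin (k + 1) => FreeGroup.of (σ j)).prod) ^ 2)

/-- The group `G_{k+1}^k`. -/
abbrev Gnk (k : ℕ) : Type := PresentedGroup (relsG k)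

/-- The subgroup `H_k` of `G_{k+1}^k` generated by the (images of the) first `k` generators
`b_1, …, b_k`. -/
def Hk (k : ℕ) : Subgroup (Gnk k) :=
  Subgroup.closure (Set.range fun i : Fin k =>
    PresentedGroup.of (rels := relsG k) (Fin.castSucc i))

/-- The relators of the free product `F_{k-1}` of copies of `ℤ/2` indexed by functions
`Fin (k-1) → ZMod 2`: the squares of all generators. -/
def relsF (k : ℕ) : Set (FreeGroup ((Fin (k - 1)) → ZMod 2)) :=
  Set.range fun m : (Fin (k - 1)) → ZMod 2 => FreeGroup.of m ^ 2

/-- The free product `F_{k-1} = ℤ/2 * ⋯ * ℤ/2` (one copy for each `m : Fin (k-1) → ZMod 2`). -/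
abbrev Fkm1 (k : ℕ) : Type := PresentedGroup (relsF k)

/-- The index of an occurrence of the letter `b_{k+1}` preceded by the prefix `pre`: the
function `Fin (k-1) → ZMod 2` sending `j` to the number of occurrences of `b_j` in `pre` plus
the number of occurrences of `b_k` in `pre`, modulo 2.  (The generator `b_j`, `1 ≤ j ≤ k-1`,
is the letter `⟨j-1, _⟩ : Fin (k+1)` and `b_k` is the letter `⟨k-1, _⟩ : Fin (k+1)`.) -/
def idx (k : ℕ) (pre : List (Fin (k + 1))) : (Fin (k - 1)) → ZMod 2 := fun j =>
  (pre.count (Fin.castLE (by omega) j) : ZMod 2) +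
    (pre.count (⟨k - 1, by omega⟩ : Fin (k + 1)) : ZMod 2)

/-- The word `f(w) ∈ F_{k-1}` associated with a word `w`: the product, over the occurrences of
the last letter `b_{k+1}` in `w` taken in order, of the generators `c_m` indexed by the indices
of those occurrences.  The first argument accumulates the prefix read so far. -/
def fword (k : ℕ) (pre : List (Fin (k + 1))) : List (Fin (k + 1)) → Fkm1 k
  | [] => 1
  | a :: rest =>
      (if a = Fin.last k then PresentedGroup.of (rels := relsF k) (idx k pre) else 1) *
        fword k (pre ++ [a]) rest

/-- The image in `G_{k+1}^k` of a word over the generators `b_1, …, b_{k+1}`. -/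
def wordToGnk (k : ℕ) (w : List (Fin (k + 1))) : Gnk k :=
  (w.map fun i => PresentedGroup.of (rels := relsG k) i).prod

/-!
Induct on the number of occurrences of `b_{k+1}` in `w`. In the free product `F_{k-1}` a
product of generators `c_m` with no two consecutive factors equal is a nonempty reduced word,
hence nontrivial; so if `f(w) = 1` and `b_{k+1}` occurs in `w`, two consecutive occurrences have
the same index, i.e. `w = w₁ b_{k+1} u b_{k+1} w₂` where `u` is a word in `b_1, …, b_k` whose
index vanishes.

For such `u`, `b_{k+1} u b_{k+1} ∈ H_k`. Every word `B` using each of `b_1, …, b_k` exactly once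
satisfies `b_{k+1} B b_{k+1} = B⁻¹ ∈ H_k` by the relator `(B b_{k+1})² = 1`, and a Schreier
transversal for the index map `H_k → (ℤ/2)^{k-1}` writes `u` as a product of quotients of such
words. Replacing `b_{k+1} u b_{k+1}` by a word in `b_1, …, b_k` removes two occurrences of
`b_{k+1}` and changes neither the image in `G_{k+1}^k` nor `f(w)`, which only loses a factor
`c_m c_m`.
-/

theorem Subgroup.mul_list_prod_mul_inv_mem {G α V : Type*} [Group G] [AddMonoid V]
    (T : Subgroup G) (t : V → G) (g : α → G) (d : α → V) {l : List α}
    (hstep : ∀ S, ∀ a ∈ l, t S * g a * (t (S + d a))⁻¹ ∈ T) (S : V) :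
    t S * (l.map g).prod * (t (S + (l.map d).sum))⁻¹ ∈ T := by
  induction l generalizing S with
  | nil => simp
  | cons a l ih =>
    have hrest := ih (fun S a ha => hstep S a (List.mem_cons_of_mem _ ha)) (S + d a)
    have key : t S * ((a :: l).map g).prod * (t (S + ((a :: l).map d).sum))⁻¹ =
        (t S * g a * (t (S + d a))⁻¹) *
          (t (S + d a) * (l.map g).prod * (t (S + d a + (l.map d).sum))⁻¹) := by
      simp only [List.map_cons, List.prod_cons, List.sum_cons, add_assoc]
      group
    rw [key]
    exact T.mul_mem (hstep S a List.mem_cons_self) hrest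

theorem Subgroup.list_prod_mem_of_transversal {G α V : Type*} [Group G] [AddMonoid V]
    (T : Subgroup G) (t : V → G) (ht : t 0 = 1) (g : α → G) (d : α → V) {l : List α}
    (hstep : ∀ S, ∀ a ∈ l, t S * g a * (t (S + d a))⁻¹ ∈ T) (hl : (l.map d).sum = 0) :
    (l.map g).prod ∈ T := by
  simpa [ht, hl] using T.mul_list_prod_mul_inv_mem t g d hstep 0

theorem Monoid.CoprodI.list_prod_map_of_ne_one {ι : Type*} {M : ι → Type*} [∀ i, Monoid (M i)]
    (m : ∀ i, M i) (hm : ∀ i, m i ≠ 1) {l : List ι} (hl : l ≠ [])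
    (hchain : l.IsChain (· ≠ ·)) : (l.map fun i => of (m i)).prod ≠ 1 := by
  classical
  let w : Word M :=
    { toList := l.map fun i => ⟨i, m i⟩
      ne_one := by
        simp only [List.mem_map]
        rintro _ ⟨i, -, rfl⟩
        exact hm i
      chain_ne := (List.isChain_map _).mpr hchain }
  intro h
  have hw : w = Word.empty :=
    Word.equiv.symm.injective (by simpa [Word.equiv, Word.prod, w, Function.comp_def] using h)
  exact hl (List.map_eq_nil_iff.mp (congrArg Word.toList hw))

theorem pow_two_eq_one_of_zmod_two {ι : Type*} (y : Multiplicative (ι → ZMod 2)) : y ^ 2 = 1 := by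
  ext i
  simp only [toAdd_pow, toAdd_one, Pi.smul_apply, Pi.zero_apply, nsmul_eq_mul]
  generalize y.toAdd i = x
  revert x; decide

namespace Gnk

variable {k : ℕ}

abbrev gen (a : Fin (k + 1)) : Gnk k := PresentedGroup.of a

theorem gen_mul_self (a : Fin (k + 1)) : gen a * gen a = 1 := by
  have h := PresentedGroup.one_of_mem (rels := relsG k) (x := FreeGroup.of a ^ 2)
    (.inl ⟨a, rfl⟩)
  rwa [map_pow, pow_two] at h

theorem gen_inv (a : Fin (k + 1)) : (gen a)⁻¹ = gen a :=
  inv_eq_of_mul_eq_one_right (gen_mul_self a)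

@[simp] theorem wordToGnk_nil : wordToGnk k [] = 1 := rfl

@[simp] theorem wordToGnk_cons (a : Fin (k + 1)) (w : List (Fin (k + 1))) :
    wordToGnk k (a :: w) = gen a * wordToGnk k w := by
  simp [wordToGnk]

@[simp] theorem wordToGnk_append (u v : List (Fin (k + 1))) :
    wordToGnk k (u ++ v) = wordToGnk k u * wordToGnk k v := by
  simp [wordToGnk]

theorem wordToGnk_reverse (u : List (Fin (k + 1))) :
    wordToGnk k u.reverse = (wordToGnk k u)⁻¹ := by
  induction u with
  | nil => simp
  | cons a u ih => simp [ih, gen_inv]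

theorem wordToGnk_mul_self_of_nodup {l : List (Fin (k + 1))} (hnd : l.Nodup)
    (hall : ∀ a, a ∈ l) : wordToGnk k l * wordToGnk k l = 1 := by
  let e := List.Nodup.getEquivOfForallMemList l hnd hall
  have hlen : l.length = k + 1 := by simpa using Fintype.card_congr e
  let σ : Equiv.Perm (Fin (k + 1)) := (finCongr hlen.symm).trans e
  have hσ : List.ofFn (fun j => σ j) = l := by
    exact List.ext_getElem (by simp [hlen]) fun n _ _ => by rw [List.getElem_ofFn]; rfl
  have h := PresentedGroup.one_of_mem (rels := relsG k)
    (x := (List.ofFn fun j => FreeGroup.of (σ j)).prod ^ 2) (.inr ⟨σ, rfl⟩)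
  have hw : wordToGnk k l =
      ((List.ofFn fun j => FreeGroup.of (σ j)).map (PresentedGroup.mk _)).prod := by
    rw [← hσ, wordToGnk, List.map_ofFn, List.map_ofFn]
    rfl
  rwa [map_pow, map_list_prod, pow_two, ← hw] at h

theorem mem_Hk_iff {x : Gnk k} : x ∈ Hk k ↔ ∃ u, Fin.last k ∉ u ∧ wordToGnk k u = x := by
  constructor
  · intro hx
    induction hx using Subgroup.closure_induction with
    | mem x hx =>
      obtain ⟨i, rfl⟩ := hx
      exact ⟨[i.castSucc], by simpa using (Fin.castSucc_lt_last i).ne', by simp⟩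
    | one => exact ⟨[], List.not_mem_nil, rfl⟩
    | mul x y _ _ hx hy =>
      obtain ⟨u, hu, rfl⟩ := hx
      obtain ⟨v, hv, rfl⟩ := hy
      exact ⟨u ++ v, by simp [hu, hv], wordToGnk_append u v⟩
    | inv x _ hx =>
      obtain ⟨u, hu, rfl⟩ := hx
      exact ⟨u.reverse, by simpa using hu, wordToGnk_reverse u⟩
  · rintro ⟨u, hu, rfl⟩
    refine Subgroup.list_prod_mem _ fun x hx => ?_
    obtain ⟨a, ha, rfl⟩ := List.mem_map.mp hx
    obtain ⟨i, rfl⟩ := Fin.exists_castSucc_eq.mpr (ne_of_mem_of_not_mem ha hu)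
    exact Subgroup.subset_closure ⟨i, rfl⟩

/-- The letter `b_{j+1}`, for `j : Fin (k - 1)`. -/
abbrev letter (j : Fin (k - 1)) : Fin (k + 1) := Fin.castLE (by omega) j

/-- The letter `b_k`. -/
abbrev penult : Fin (k + 1) := ⟨k - 1, by omega⟩

theorem letter_injective : Function.Injective (letter (k := k)) :=
  fun _ _ h => Fin.ext (by simpa using congrArg Fin.val h)

theorem letter_ne_penult (j : Fin (k - 1)) : letter j ≠ penult := by
  simp [Fin.ext_iff]; omega

theorem letter_ne_last (j : Fin (k - 1)) : letter j ≠ Fin.last k := by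
  simp [Fin.ext_iff]; omega

theorem penult_ne_last (hk : 1 ≤ k) : (penult : Fin (k + 1)) ≠ Fin.last k := by
  simp [Fin.ext_iff]; omega

theorem eq_letter_or_eq_penult_or_eq_last (a : Fin (k + 1)) :
    (∃ j, a = letter j) ∨ a = penult ∨ a = Fin.last k := by
  by_cases ha : (a : ℕ) < k - 1
  · exact .inl ⟨⟨a, ha⟩, rfl⟩
  · right
    by_cases ha' : (a : ℕ) = k - 1
    · exact .inl (Fin.ext ha')
    · exact .inr (Fin.ext (by simp; omega))

theorem idx_nil : idx k [] = 0 := by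
  ext; simp [idx]

theorem idx_append (u v : List (Fin (k + 1))) : idx k (u ++ v) = idx k u + idx k v := by
  ext j
  simp only [idx, List.count_append, Pi.add_apply]
  push_cast
  ring

theorem idx_cons (a : Fin (k + 1)) (u : List (Fin (k + 1))) :
    idx k (a :: u) = idx k [a] + idx k u :=
  idx_append [a] u

theorem idx_letter (i : Fin (k - 1)) : idx k [letter i] = Pi.single i 1 := by
  ext j
  have hi : (i : ℕ) ≠ k - 1 := by omega
  rcases eq_or_ne j i with rfl | hji
  · simp [idx, Fin.ext_iff, hi]
  · simp [idx, Fin.ext_iff, Fin.val_inj, hji, Ne.symm hji, hi]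

theorem idx_penult : idx k [penult] = 1 := by
  ext j
  have hj : k - 1 ≠ (j : ℕ) := by omega
  simp [idx, Fin.ext_iff, hj]

theorem idx_last (hk : 1 ≤ k) : idx k [Fin.last k] = 0 := by
  ext j
  have hj : k ≠ (j : ℕ) := by omega
  have hk' : k ≠ k - 1 := by omega
  simp [idx, Fin.ext_iff, hj, hk']

def idxHom : Gnk k →* Multiplicative (Fin (k - 1) → ZMod 2) :=
  PresentedGroup.toGroup (f := fun a => .ofAdd (idx k [a])) <| by
    rintro r (⟨i, rfl⟩ | ⟨σ, rfl⟩) <;> rw [map_pow] <;> exact pow_two_eq_one_of_zmod_two _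

theorem idxHom_gen (a : Fin (k + 1)) : idxHom (gen a) = .ofAdd (idx k [a]) :=
  PresentedGroup.toGroup.of _

theorem idxHom_wordToGnk (u : List (Fin (k + 1))) :
    idxHom (wordToGnk k u) = .ofAdd (idx k u) := by
  induction u with
  | nil => simp [idx_nil]
  | cons a u ih => rw [wordToGnk_cons, map_mul, ih, idxHom_gen, idx_cons a u, ofAdd_add]

theorem idx_eq_sum (u : List (Fin (k + 1))) : idx k u = (u.map fun a => idx k [a]).sum := by
  induction u with
  | nil => exact idx_nil
  | cons a u ih => rw [idx_cons, ih, List.map_cons, List.sum_cons]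

def conjLastPreimage (k : ℕ) : Subgroup (Gnk k) :=
  (Hk k).comap (MulAut.conj (gen (Fin.last k))).toMonoidHom

theorem mem_conjLastPreimage {x : Gnk k} :
    x ∈ conjLastPreimage k ↔ gen (Fin.last k) * x * gen (Fin.last k) ∈ Hk k := by
  simp [conjLastPreimage, gen_inv]

theorem conj_last_wordToGnk {l : List (Fin (k + 1))} (hnd : l.Nodup)
    (hl : ∀ a, a ∈ l ↔ a ≠ Fin.last k) :
    gen (Fin.last k) * wordToGnk k l * gen (Fin.last k) = (wordToGnk k l)⁻¹ := by
  have hsq := wordToGnk_mul_self_of_nodup (l := l ++ [Fin.last k])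
    (List.nodup_append.mpr ⟨hnd, List.nodup_singleton _, by simp [hl]⟩)
    (fun a => by by_cases ha : a = Fin.last k <;> simp [ha, hl])
  simp only [wordToGnk_append, wordToGnk_cons, wordToGnk_nil, mul_one] at hsq
  exact eq_inv_of_mul_eq_one_right (by rw [← hsq]; group)

theorem wordToGnk_mem_conjLastPreimage {l : List (Fin (k + 1))} (hnd : l.Nodup)
    (hl : ∀ a, a ∈ l ↔ a ≠ Fin.last k) : wordToGnk k l ∈ conjLastPreimage k := by
  rw [mem_conjLastPreimage, conj_last_wordToGnk hnd hl]
  exact inv_mem (mem_Hk_iff.mpr ⟨l, fun h => (hl _).mp h rfl, rfl⟩)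

theorem wordToGnk_block_mem_conjLastPreimage (hk : 1 ≤ k) {L₁ L₂ : List (Fin (k - 1))}
    (hnd : (L₁ ++ L₂).Nodup) (hall : ∀ j, j ∈ L₁ ++ L₂) :
    wordToGnk k (L₁.map letter ++ penult :: L₂.map letter) ∈ conjLastPreimage k := by
  apply wordToGnk_mem_conjLastPreimage
  · refine (List.perm_middle.nodup_iff).mpr (List.nodup_cons.mpr ⟨?_, ?_⟩)
    · simpa [← List.map_append] using fun j _ => letter_ne_penult j
    · simpa [← List.map_append] using hnd.map letter_injective
  · intro a
    constructor
    · simp only [List.mem_append, List.mem_map, List.mem_cons]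
      rintro (⟨j, -, rfl⟩ | rfl | ⟨j, -, rfl⟩)
      exacts [letter_ne_last j, penult_ne_last hk, letter_ne_last j]
    · intro ha
      rcases eq_letter_or_eq_penult_or_eq_last a with ⟨j, rfl⟩ | rfl | rfl
      · rcases List.mem_append.mp (hall j) with h | h <;> simp [h]
      · simp
      · exact absurd rfl ha

def oneSet (S : Fin (k - 1) → ZMod 2) : Finset (Fin (k - 1)) := {j | S j = 1}

theorem oneSet_zero : oneSet (0 : Fin (k - 1) → ZMod 2) = ∅ := by
  ext; simp [oneSet]

theorem oneSet_add_single {S : Fin (k - 1) → ZMod 2} {i : Fin (k - 1)} (hi : S i = 0) :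
    oneSet (S + Pi.single i 1) = insert i (oneSet S) := by
  ext j
  rcases eq_or_ne j i with rfl | hji
  · simp [oneSet, hi]
  · simp [oneSet, hji]

theorem oneSet_add_one (S : Fin (k - 1) → ZMod 2) : oneSet (S + 1) = (oneSet S)ᶜ := by
  ext j
  simp only [oneSet, Finset.mem_filter, Finset.mem_univ, true_and, Finset.mem_compl,
    Pi.add_apply, Pi.one_apply]
  generalize S j = x
  revert x; decide

noncomputable def transversal (S : Fin (k - 1) → ZMod 2) : Gnk k :=
  wordToGnk k ((oneSet S).toList.map letter)

theorem transversal_zero : transversal (0 : Fin (k - 1) → ZMod 2) = 1 := by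
  simp [transversal, oneSet_zero]

theorem transversal_mul_letter_mem (hk : 1 ≤ k) {S : Fin (k - 1) → ZMod 2} {i : Fin (k - 1)}
    (hi : S i = 0) :
    transversal S * gen (letter i) * (transversal (S + idx k [letter i]))⁻¹ ∈
      conjLastPreimage k := by
  -- `B₁ = t_S b_i R b_k` and `B₂ = t_{S + e_i} R b_k` share the tail `R b_k`, where `R` lists the
  -- complement of `insert i (oneSet S)`.
  have his : i ∉ oneSet S := by simp [oneSet, hi]
  have hB₁ := wordToGnk_block_mem_conjLastPreimage hk
    (L₁ := (oneSet S).toList ++ i :: (insert i (oneSet S))ᶜ.toList) (L₂ := [])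
    (by simp [List.nodup_append, Finset.nodup_toList]; grind) (fun j => by simp; tauto)
  have hB₂ := wordToGnk_block_mem_conjLastPreimage hk
    (L₁ := (insert i (oneSet S)).toList ++ (insert i (oneSet S))ᶜ.toList) (L₂ := [])
    (by simp [List.nodup_append, Finset.nodup_toList]; grind) (fun j => by simp; tauto)
  convert mul_mem hB₁ (inv_mem hB₂) using 1
  simp only [transversal, idx_letter, oneSet_add_single hi, List.map_append, List.map_cons,
    List.map_nil, wordToGnk_append, wordToGnk_cons, wordToGnk_nil]
  group

theorem transversal_mul_penult_mem (hk : 1 ≤ k) (S : Fin (k - 1) → ZMod 2) :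
    transversal S * gen penult * (transversal (S + idx k [penult]))⁻¹ ∈
      conjLastPreimage k := by
  have hB := wordToGnk_block_mem_conjLastPreimage hk
    (L₁ := (oneSet S).toList) (L₂ := (oneSet S)ᶜ.toList.reverse)
    (by simp [List.nodup_append, Finset.nodup_toList]; grind) (fun j => by simp; tauto)
  convert hB using 1
  rw [transversal, transversal, idx_penult, oneSet_add_one, ← wordToGnk_reverse, List.map_reverse]
  simp only [wordToGnk_append, wordToGnk_cons]
  group

theorem transversal_mul_gen_mem (hk : 1 ≤ k) (S : Fin (k - 1) → ZMod 2) {a : Fin (k + 1)}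
    (ha : a ≠ Fin.last k) :
    transversal S * gen a * (transversal (S + idx k [a]))⁻¹ ∈ conjLastPreimage k := by
  rcases eq_letter_or_eq_penult_or_eq_last a with ⟨i, rfl⟩ | rfl | rfl
  · rcases (by decide : ∀ x : ZMod 2, x = 0 ∨ x = 1) (S i) with hi | hi
    · exact transversal_mul_letter_mem hk hi
    · -- `b_i` is an involution, so this is the inverse of the element for `S + e_i`.
      have hi' : (S + idx k [letter i]) i = 0 := by simp [idx_letter, hi]; decide
      have hS : S + idx k [letter i] + idx k [letter i] = S := by
        ext j; simp [add_assoc, CharTwo.add_self_eq_zero]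
      have := inv_mem (transversal_mul_letter_mem hk hi')
      rw [hS] at this
      convert this using 1
      simp only [mul_inv_rev, inv_inv, gen_inv, mul_assoc]
  · exact transversal_mul_penult_mem hk S
  · exact absurd rfl ha

theorem conj_last_wordToGnk_mem_Hk (hk : 1 ≤ k) {u : List (Fin (k + 1))}
    (hu : Fin.last k ∉ u) (hidx : idx k u = 0) :
    gen (Fin.last k) * wordToGnk k u * gen (Fin.last k) ∈ Hk k :=
  mem_conjLastPreimage.mp <| (conjLastPreimage k).list_prod_mem_of_transversal transversal
    transversal_zero gen (fun a => idx k [a])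
    (fun S _ ha => transversal_mul_gen_mem hk S (ne_of_mem_of_not_mem ha hu))
    ((idx_eq_sum u).symm.trans hidx)

end Gnk

namespace Fkm1

variable {k : ℕ}

abbrev gen (m : Fin (k - 1) → ZMod 2) : Fkm1 k := PresentedGroup.of m

theorem gen_mul_self (m : Fin (k - 1) → ZMod 2) : gen m * gen (k := k) m = 1 := by
  have h := PresentedGroup.one_of_mem (rels := relsF k) (x := FreeGroup.of m ^ 2) ⟨m, rfl⟩
  rwa [map_pow, pow_two] at h

def toCoprodI :
    Fkm1 k →* Monoid.CoprodI fun _ : Fin (k - 1) → ZMod 2 => Multiplicative (ZMod 2) :=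
  PresentedGroup.toGroup (f := fun m => Monoid.CoprodI.of (i := m) (.ofAdd 1)) <| by
    rintro _ ⟨m, rfl⟩
    rw [map_pow, FreeGroup.lift_apply_of, ← map_pow]
    exact (congrArg _ (by decide)).trans (map_one _)

theorem toCoprodI_gen (m : Fin (k - 1) → ZMod 2) :
    toCoprodI (gen m) = Monoid.CoprodI.of (i := m) (.ofAdd 1) :=
  PresentedGroup.toGroup.of _

theorem list_prod_map_gen_ne_one {l : List (Fin (k - 1) → ZMod 2)} (hl : l ≠ [])
    (hchain : l.IsChain (· ≠ ·)) : (l.map (gen (k := k))).prod ≠ 1 := by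
  intro h
  have h' := congrArg toCoprodI h
  rw [map_list_prod, List.map_map, map_one] at h'
  refine Monoid.CoprodI.list_prod_map_of_ne_one (M := fun _ => Multiplicative (ZMod 2))
    (fun _ => .ofAdd 1) (fun _ => by decide) hl hchain ?_
  simpa [Function.comp_def, toCoprodI_gen] using h'

end Fkm1

section Words

variable {k : ℕ}

open Gnk

theorem fword_append (pre u v : List (Fin (k + 1))) :
    fword k pre (u ++ v) = fword k pre u * fword k (pre ++ u) v := by
  induction u generalizing pre with
  | nil => simp [fword]
  | cons a u ih => simp [fword, ih, mul_assoc]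

theorem fword_eq_one_of_last_notMem {u : List (Fin (k + 1))} (hu : Fin.last k ∉ u)
    (pre : List (Fin (k + 1))) : fword k pre u = 1 := by
  induction u generalizing pre with
  | nil => rfl
  | cons a u ih =>
    simp only [List.mem_cons, not_or] at hu
    simp [fword, Ne.symm hu.1, ih hu.2]

theorem fword_congr_idx {pre pre' : List (Fin (k + 1))} (h : idx k pre = idx k pre')
    (u : List (Fin (k + 1))) : fword k pre u = fword k pre' u := by
  induction u generalizing pre pre' with
  | nil => rfl
  | cons a u ih =>
    have h' : idx k (pre ++ [a]) = idx k (pre' ++ [a]) := by simp only [idx_append, h]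
    rw [fword, fword, h, ih h']

theorem fword_last_append_last (hk : 1 ≤ k) {u : List (Fin (k + 1))} (hu : Fin.last k ∉ u)
    (hidx : idx k u = 0) (pre : List (Fin (k + 1))) :
    fword k pre (Fin.last k :: (u ++ [Fin.last k])) = 1 := by
  have hpre : idx k (pre ++ Fin.last k :: u) = idx k pre := by
    rw [idx_append, idx_cons, idx_last hk, hidx, zero_add, add_zero]
  simpa [fword, fword_append, fword_eq_one_of_last_notMem hu, hpre] using Fkm1.gen_mul_self _

theorem fword_cancel (hk : 1 ≤ k) {u v : List (Fin (k + 1))} (hu : Fin.last k ∉ u)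
    (hidx : idx k u = 0) (hv : Fin.last k ∉ v) (hidx' : idx k v = 0)
    (pre w₁ w₂ : List (Fin (k + 1))) :
    fword k pre (w₁ ++ Fin.last k :: (u ++ Fin.last k :: w₂)) =
      fword k pre (w₁ ++ (v ++ w₂)) := by
  have hsplit : Fin.last k :: (u ++ Fin.last k :: w₂) =
      Fin.last k :: (u ++ [Fin.last k]) ++ w₂ := by
    simp
  have hpre : idx k (pre ++ w₁ ++ Fin.last k :: (u ++ [Fin.last k])) =
      idx k (pre ++ w₁ ++ v) := by
    simp only [idx_append, idx_cons, idx_last hk, hidx, hidx', add_zero]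
  rw [hsplit, fword_append, fword_append, fword_last_append_last hk hu hidx, fword_append,
    fword_append, fword_eq_one_of_last_notMem hv, fword_congr_idx hpre]

/-- The indices `m_p` of the occurrences `p` of `b_{k+1}` in `w`, in order, given that `w`
follows the prefix `pre`. -/
def lastIdxs (k : ℕ) (pre : List (Fin (k + 1))) :
    List (Fin (k + 1)) → List (Fin (k - 1) → ZMod 2)
  | [] => []
  | a :: rest => (if a = Fin.last k then [idx k pre] else []) ++ lastIdxs k (pre ++ [a]) rest

theorem fword_eq_prod_lastIdxs (pre w : List (Fin (k + 1))) :
    fword k pre w = ((lastIdxs k pre w).map Fkm1.gen).prod := by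
  induction w generalizing pre with
  | nil => rfl
  | cons a w ih => by_cases ha : a = Fin.last k <;> simp [fword, lastIdxs, ha, ih]

theorem lastIdxs_eq_nil_iff {pre w : List (Fin (k + 1))} :
    lastIdxs k pre w = [] ↔ Fin.last k ∉ w := by
  induction w generalizing pre with
  | nil => simp [lastIdxs]
  | cons a w ih => by_cases ha : a = Fin.last k <;> simp [lastIdxs, ha, ih, eq_comm]

theorem exists_eq_of_head?_lastIdxs {pre w : List (Fin (k + 1))} {m : Fin (k - 1) → ZMod 2}
    (h : (lastIdxs k pre w).head? = some m) :
    ∃ u w₂, w = u ++ Fin.last k :: w₂ ∧ Fin.last k ∉ u ∧ m = idx k (pre ++ u) := by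
  induction w generalizing pre with
  | nil => simp [lastIdxs] at h
  | cons a w ih =>
    by_cases ha : a = Fin.last k
    · subst ha
      exact ⟨[], w, rfl, List.not_mem_nil, by simpa [lastIdxs, eq_comm] using h⟩
    · have h' : (lastIdxs k (pre ++ [a]) w).head? = some m := by simpa [lastIdxs, ha] using h
      obtain ⟨u, w₂, rfl, hu, rfl⟩ := ih h'
      exact ⟨a :: u, w₂, rfl, by simp [hu, Ne.symm ha], by simp⟩

def HasCancellablePair (k : ℕ) (w : List (Fin (k + 1))) : Prop :=
  ∃ w₁ u w₂,
    w = w₁ ++ Fin.last k :: (u ++ Fin.last k :: w₂) ∧ Fin.last k ∉ u ∧ idx k u = 0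

theorem isChain_lastIdxs (hk : 1 ≤ k) {w : List (Fin (k + 1))} (h : ¬ HasCancellablePair k w)
    (pre : List (Fin (k + 1))) : (lastIdxs k pre w).IsChain (· ≠ ·) := by
  induction w generalizing pre with
  | nil => exact .nil
  | cons a w ih =>
    have hw : ¬ HasCancellablePair k w := fun ⟨w₁, u, w₂, hw, hu, hidx⟩ =>
      h ⟨a :: w₁, u, w₂, by simp [hw], hu, hidx⟩
    by_cases ha : a = Fin.last k
    · subst ha
      simp only [lastIdxs, if_true, List.singleton_append, List.isChain_cons]
      refine ⟨fun m hm heq => ?_, ih hw _⟩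
      obtain ⟨u, w₂, rfl, hu, rfl⟩ := exists_eq_of_head?_lastIdxs (Option.mem_def.mp hm)
      refine h ⟨[], u, w₂, rfl, hu, ?_⟩
      simpa [idx_append, idx_cons, idx_last hk] using heq
    · simpa [lastIdxs, ha] using ih hw (pre ++ [a])

theorem hasCancellablePair_of_fword_eq_one (hk : 1 ≤ k) {w : List (Fin (k + 1))}
    (h : fword k [] w = 1) (hw : Fin.last k ∈ w) : HasCancellablePair k w := by
  by_contra hc
  exact Fkm1.list_prod_map_gen_ne_one (mt lastIdxs_eq_nil_iff.mp (not_not.mpr hw))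
    (isChain_lastIdxs hk hc []) ((fword_eq_prod_lastIdxs [] w).symm.trans h)

theorem wordToGnk_mem_Hk_of_fword_eq_one (hk : 1 ≤ k) {w : List (Fin (k + 1))}
    (h : fword k [] w = 1) : wordToGnk k w ∈ Hk k := by
  induction hn : w.count (Fin.last k) using Nat.strong_induction_on generalizing w with
  | _ n ih =>
  by_cases hw : Fin.last k ∈ w
  · obtain ⟨w₁, u, w₂, rfl, hu, hidx⟩ := hasCancellablePair_of_fword_eq_one hk h hw
    obtain ⟨v, hv, hvu⟩ := mem_Hk_iff.mp (conj_last_wordToGnk_mem_Hk hk hu hidx)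
    have hidxv : idx k v = 0 := by
      apply Multiplicative.ofAdd.injective
      rw [← idxHom_wordToGnk, hvu, map_mul, map_mul, idxHom_gen, idxHom_wordToGnk, idx_last hk,
        hidx]
      rfl
    have hword : wordToGnk k (w₁ ++ Fin.last k :: (u ++ Fin.last k :: w₂)) =
        wordToGnk k (w₁ ++ (v ++ w₂)) := by
      simp [hvu, mul_assoc]
    rw [hword]
    refine ih _ ?_ ((fword_cancel hk hu hidx hv hidxv [] w₁ w₂).symm.trans h) rfl
    rw [← hn]
    simp [List.count_append, List.count_eq_zero_of_not_mem hu, List.count_eq_zero_of_not_mem hv]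
  · exact mem_Hk_iff.mpr ⟨w, hw, rfl⟩

end Words

/-- Let `k ≥ 2` and let `w` be a word in the generators `b_1, …, b_{k+1}` of
`G_{k+1}^k`.  If the element `f(w)` of the free product `F_{k-1}`, given as the ordered product
of the generators `c_{m_p}` over the occurrences `p` of `b_{k+1}` in `w`, is trivial, then the
image of `w` in `G_{k+1}^k` belongs to the subgroup `H_k`. -/
theorem stmt_8 (k : ℕ) (hk : 2 ≤ k) (w : List (Fin (k + 1)))
    (h : fword k [] w = 1) : wordToGnk k w ∈ Hk k :=
  wordToGnk_mem_Hk_of_fword_eq_one (by omega) h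
end

section
/- For every k ≥ 2, the subgroup K_k of G_{k+1}^k generated by all products B_σ = b_{σ(1)} b_{σ(2)} ⋯ b_{σ(k)}, where σ ranges over all permutations of {1, …, k}, is a normal subgroup of G_{k+1}^k. -/
/-- The subgroup `K_k` of `G_{k+1}^k` generated by the products
`B_σ = b_{σ(1)} b_{σ(2)} ⋯ b_{σ(k)}` over all permutations `σ` of `{1, …, k}`. -/
def Kk (k : ℕ) : Subgroup (Gnk k) :=
  Subgroup.closure (Set.range fun σ : Equiv.Perm (Fin k) =>
    ((List.ofFn fun j : Fin k =>
      PresentedGroup.of (rels := relsG k) (Fin.castSucc (σ j))).prod))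

namespace Stmt9

variable {k : ℕ}

noncomputable def b (i : Fin (k+1)) : Gnk k := PresentedGroup.of (rels := relsG k) i

lemma mk_rel_one {r : FreeGroup (Fin (k+1))} (hr : r ∈ relsG k) :
    PresentedGroup.mk (relsG k) r = 1 :=
  (QuotientGroup.eq_one_iff r).mpr (Subgroup.subset_normalClosure hr)

lemma b_sq (i : Fin (k+1)) : b i * b i = (1 : Gnk k) := by
  have : PresentedGroup.mk (relsG k) (FreeGroup.of i ^ 2) = 1 :=
    mk_rel_one (Or.inl ⟨i, rfl⟩)
  rwa [map_pow, sq] at this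

lemma b_inv (i : Fin (k+1)) : (b i)⁻¹ = (b (k := k) i) :=
  inv_eq_of_mul_eq_one_right (b_sq i)

lemma perm_rel (σ : Equiv.Perm (Fin (k+1))) :
    ((List.ofFn fun j : Fin (k+1) => b (k := k) (σ j)).prod) ^ 2 = 1 := by
  have : PresentedGroup.mk (relsG k)
      (((List.ofFn fun j : Fin (k+1) => FreeGroup.of (σ j)).prod) ^ 2) = 1 :=
    mk_rel_one (Or.inr ⟨σ, rfl⟩)
  rwa [map_pow, map_list_prod, List.map_ofFn] at this

noncomputable def g' (i : Fin k) : Gnk k := b (Fin.castSucc i)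

lemma mem_K_of_perm (l : List (Fin k)) (hl : l.Perm (List.finRange k)) :
    ((l.map g').prod) ∈ Kk k := by
  have hlen : l.length = k := by simpa using hl.length_eq
  have hnd : l.Nodup := hl.nodup_iff.mpr (List.nodup_finRange k)
  have hinj : Function.Injective fun i : Fin k => l.get (Fin.cast hlen.symm i) := by
    intro a b hab
    have := List.nodup_iff_injective_get.mp hnd hab
    simpa [Fin.ext_iff] using this
  have hbij : Function.Bijective fun i : Fin k => l.get (Fin.cast hlen.symm i) :=
    Finite.injective_iff_bijective.mp hinj
  let σ : Equiv.Perm (Fin k) := Equiv.ofBijective _ hbij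
  have key : (List.ofFn fun j : Fin k =>
      PresentedGroup.of (rels := relsG k) (Fin.castSucc (σ j))) = l.map g' := by
    apply List.ext_getElem
    · simp [hlen]
    · intro n h1 h2
      simp [σ, Equiv.ofBijective, g', b, List.get]
  refine Subgroup.subset_closure ⟨σ, ?_⟩
  dsimp only
  rw [key]

lemma gen_eq (σ : Equiv.Perm (Fin k)) :
    (List.ofFn fun j : Fin k =>
      PresentedGroup.of (rels := relsG k) (Fin.castSucc (σ j))).prod
      = (((List.ofFn fun j => σ j).map g').prod) := by
  rw [List.map_ofFn]; rfl

lemma ofFn_perm (σ : Equiv.Perm (Fin k)) :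
    (List.ofFn fun j => σ j).Perm (List.finRange k) := by
  apply List.perm_of_nodup_nodup_toFinset_eq
  · exact List.nodup_ofFn.mpr σ.injective
  · exact List.nodup_finRange k
  · apply Finset.eq_of_subset_of_card_le
    · intro x _; simp [List.mem_toFinset]
    · rw [List.toFinset_card_of_nodup (List.nodup_finRange k),
        List.toFinset_card_of_nodup (List.nodup_ofFn.mpr σ.injective)]
      simp

/-- conjugation by the last generator, via the long relators -/
lemma conj_last (σ : Equiv.Perm (Fin k)) :
    b (Fin.last k) * (List.ofFn fun j : Fin k =>
      PresentedGroup.of (rels := relsG k) (Fin.castSucc (σ j))).prod * b (Fin.last k)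
      = ((List.ofFn fun j : Fin k =>
      PresentedGroup.of (rels := relsG k) (Fin.castSucc (σ j))).prod)⁻¹ := by
  have hcc : b (k := k) (Fin.last k) * b (Fin.last k) = 1 := b_sq _
  set c := b (k := k) (Fin.last k) with hcdef
  set B := (List.ofFn fun j : Fin k =>
      PresentedGroup.of (rels := relsG k) (Fin.castSucc (σ j))).prod with hB
  let t : Equiv.Perm (Fin (k+1)) := (finSuccEquivLast.symm).permCongr σ.optionCongr
  have hword : (List.ofFn fun j : Fin (k+1) => b (k := k) (t j)) =
      (List.ofFn fun j : Fin k =>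
        PresentedGroup.of (rels := relsG k) (Fin.castSucc (σ j))) ++ [c] := by
    rw [List.ofFn_succ', List.concat_eq_append]
    congr 1
    · apply List.ext_getElem
      · simp
      · intro n h1 h2
        simp [t, Equiv.permCongr_apply, b]
    · simp [t, Equiv.permCongr_apply, hcdef]
  have hrel := perm_rel (k := k) t
  rw [hword, List.prod_append, List.prod_singleton, ← hB, sq] at hrel
  have h1 : (c * B * c) * B = 1 := by
    have e : (c * B * c * B) * (c * c) = c * ((B * c) * (B * c)) * c := by group
    rw [hrel, hcc, mul_one, mul_one] at e
    rw [e, hcc]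
  exact eq_inv_of_mul_eq_one_left h1

/-- conjugation by a generator `b_j`, `j < k` : the free-cancellation identity -/
lemma conj_castSucc (j : Fin k) (l : List (Fin k)) (hl : l.Perm (List.finRange k)) :
    g' j * ((l.map g').prod) * g' j ∈ Kk k := by
  have hj : j ∈ l := hl.mem_iff.mpr (List.mem_finRange j)
  obtain ⟨l₁, l₂, rfl⟩ := List.append_of_mem hj
  have hxx : g' (k := k) j * g' j = 1 := b_sq _
  have hxinv : (g' (k := k) j)⁻¹ = g' j := b_inv _
  set x := g' (k := k) j with hx
  set p := (l₁.map g').prod with hp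
  set q := (l₂.map g').prod with hq
  have hprod : ((l₁ ++ j :: l₂).map g').prod = p * (x * q) := by
    simp [hp, hq, hx, List.prod_append]
  have key : x * (p * (x * q)) * x
      = (x * (p * q)) * (p * (x * q))⁻¹ * ((p * q) * x) := by
    rw [mul_inv_rev, mul_inv_rev, hxinv]; group
  have h1 : x * (p * q) ∈ Kk k := by
    have : ((j :: (l₁ ++ l₂)).map g').prod = x * (p * q) := by
      simp [hp, hq, hx, List.prod_append]
    rw [← this]
    exact mem_K_of_perm _ (List.perm_middle.symm.trans hl)
  have h2 : p * (x * q) ∈ Kk k := by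
    rw [← hprod]; exact mem_K_of_perm _ hl
  have h3 : (p * q) * x ∈ Kk k := by
    have : (((l₁ ++ l₂) ++ [j]).map g').prod = (p * q) * x := by
      simp [hp, hq, hx, List.prod_append, mul_assoc]
    rw [← this]
    exact mem_K_of_perm _
      (((List.perm_append_singleton j (l₁ ++ l₂)).trans List.perm_middle.symm).trans hl)
  rw [hprod, key]
  exact mul_mem (mul_mem h1 (inv_mem h2)) h3

lemma conj_gen (i : Fin (k+1)) (σ : Equiv.Perm (Fin k)) :
    b i * (List.ofFn fun j : Fin k =>
      PresentedGroup.of (rels := relsG k) (Fin.castSucc (σ j))).prod * b i ∈ Kk k := by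
  induction i using Fin.lastCases with
  | last =>
      rw [conj_last]
      exact inv_mem (Subgroup.subset_closure ⟨σ, rfl⟩)
  | cast j =>
      rw [gen_eq]
      exact conj_castSucc j _ (ofFn_perm σ)

lemma conj_mem (i : Fin (k+1)) (h : Gnk k) (hh : h ∈ Kk k) :
    b i * h * b i ∈ Kk k := by
  induction hh using Subgroup.closure_induction with
  | mem s hs =>
      obtain ⟨σ, rfl⟩ := hs
      exact conj_gen i σ
  | one =>
      rw [mul_one, b_sq]
      exact one_mem _
  | mul x y hx hy px py =>
      have e : b i * (x * y) * b i = (b i * x * b i) * (b i * y * b i) := by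
        have hsq := b_sq (k := k) i
        calc b i * (x * y) * b i = b i * x * 1 * y * b i := by group
          _ = b i * x * (b i * b i) * y * b i := by rw [hsq]
          _ = (b i * x * b i) * (b i * y * b i) := by group
      rw [e]
      exact mul_mem px py
  | inv x hx px =>
      have e : b i * x⁻¹ * b i = (b i * x * b i)⁻¹ := by
        rw [mul_inv_rev, mul_inv_rev, b_inv]
        group
      rw [e]
      exact inv_mem px

end Stmt9


/-- For every `k ≥ 2`, the subgroup `K_k` of `G_{k+1}^k` generated by all products
`B_σ = b_{σ(1)} b_{σ(2)} ⋯ b_{σ(k)}`, where `σ` ranges over all permutations of `{1, …, k}`,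
is a normal subgroup of `G_{k+1}^k`. -/
theorem stmt_9 (k : ℕ) (hk : 2 ≤ k) : (Kk k).Normal := by
  rw [← Subgroup.normalizer_eq_top_iff, eq_top_iff, ← PresentedGroup.closure_range_of (relsG k)]
  rw [Subgroup.closure_le]
  rintro _ ⟨i, rfl⟩
  rw [SetLike.mem_coe, Subgroup.mem_normalizer_iff]
  intro h
  constructor
  · intro hh
    rw [show (PresentedGroup.of (rels := relsG k) i) = Stmt9.b i from rfl, Stmt9.b_inv]
    exact Stmt9.conj_mem i h hh
  · intro hh
    have e : Stmt9.b i * (Stmt9.b i * h * (Stmt9.b (k := k) i)⁻¹) * Stmt9.b i = h := by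
      rw [Stmt9.b_inv]
      have hsq := Stmt9.b_sq (k := k) i
      calc Stmt9.b i * (Stmt9.b i * h * Stmt9.b i) * Stmt9.b i
          = (Stmt9.b i * Stmt9.b i) * h * (Stmt9.b i * Stmt9.b i) := by group
        _ = h := by rw [hsq]; group
    rw [← e]
    exact Stmt9.conj_mem i _ (by exact hh)
end

section
/- For every k ≥ 2, the subgroup K_k of G_{k+1}^k contains the commutator subgroup of H_k; that is, for all x, y ∈ H_k the commutator x⁻¹y⁻¹xy lies in K_k (equivalently ⁅H_k, H_k⁆ ≤ K_k). -/
/-!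
The subgroup generated by the products `B_σ` contains `B_σ B_τ⁻¹` for any two orders `σ, τ`;
for two orders `w m a R` and `w a m R` differing by an adjacent transposition this is the
conjugate `w ⁅b_m, b_a⁆ w⁻¹`. Multiplying such conjugates gives `⁅b_m, Q⁆ ∈ K_k` for every word
`Q` of distinct letters avoiding `m`. Since the generators are involutions, `Q⁻¹` is the reversed
word, and `b_m (P m Q) b_m = (m P Q) ⁅b_m, Q⁻¹⁆⁻¹` is again in `K_k`; hence `H_k` normalizes
`K_k`. A subgroup normalized by `H_k` and containing the commutators of its generators contains
`⁅H_k, H_k⁆`.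
-/

open Subgroup
open scoped commutatorElement

section

variable {G : Type*} [Group G]

theorem Subgroup.commutator_closure_le {s : Set G} {K : Subgroup G}
    (hnorm : closure s ≤ normalizer (K : Set G)) (hs : ∀ x ∈ s, ∀ y ∈ s, ⁅x, y⁆ ∈ K) :
    ⁅closure s, closure s⁆ ≤ K := by
  have conj_mem {x y : G} (hx : x ∈ closure s) (hy : y ∈ K) : x * y * x⁻¹ ∈ K :=
    (hnorm hx y).1 hy
  rw [commutator_le]
  intro x hx y hy
  induction hx, hy using closure_induction₂ with
  | mem x y hx hy => exact hs x hx y hy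
  | one_left x _ => simp
  | one_right x _ => simp
  | mul_left x y z hx _ _ hxz hyz =>
    rw [commutatorElement_mul_left_eq_conj_mul]
    exact mul_mem (conj_mem hx hyz) hxz
  | mul_right y z x hy _ _ hxy hxz =>
    rw [commutatorElement_mul_right_eq_mul_conj, mul_assoc _ y, mul_assoc]
    exact mul_mem hxy (conj_mem hy hxz)
  | inv_left x y hx _ hxy =>
    rw [commutatorElement_inv_left, ← commutatorElement_inv]
    simpa using conj_mem (inv_mem hx) (inv_mem hxy)
  | inv_right x y _ hy hxy =>
    rw [commutatorElement_inv_right, ← commutatorElement_inv]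
    simpa using conj_mem (inv_mem hy) (inv_mem hxy)

theorem Subgroup.mem_normalizer_closure_of_inv_eq_self {s : Set G} {g : G} (hg : g⁻¹ = g)
    (h : ∀ x ∈ s, g * x * g⁻¹ ∈ closure s) : g ∈ normalizer (closure s : Set G) := by
  have conj_mem : closure s ≤ (closure s).comap (MulAut.conj g).toMonoidHom :=
    closure_le _ |>.2 h
  refine fun x => ⟨fun hx => by simpa using conj_mem hx, fun hx => ?_⟩
  have hgg : g * g = 1 := by simpa [hg] using mul_inv_cancel g
  have hconj := conj_mem hx
  rwa [mem_comap, MulEquiv.coe_toMonoidHom, MulAut.conj_apply, hg, ← mul_assoc, ← mul_assoc,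
    hgg, one_mul, mul_assoc, hgg, mul_one] at hconj

variable {n : ℕ} (b : Fin n → G)

def permProductSubgroup : Subgroup G :=
  closure (Set.range fun σ : Equiv.Perm (Fin n) => (List.ofFn fun j => b (σ j)).prod)

theorem prod_mem_permProductSubgroup {l : List (Fin n)} (hl : l.Nodup) (hall : ∀ i, i ∈ l) :
    (l.map b).prod ∈ permProductSubgroup b := by
  have hlen : l.length = n := Fin.equiv_iff_eq.1 ⟨hl.getEquivOfForallMemList l hall⟩
  let σ : Equiv.Perm (Fin n) := (finCongr hlen.symm).trans (hl.getEquivOfForallMemList l hall)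
  refine subset_closure ⟨σ, ?_⟩
  have hσ : List.ofFn σ = l := by
    rw [← List.ofFn_get l, List.ofFn_congr hlen.symm]
    rfl
  simp only [← hσ, List.map_ofFn]
  rfl

theorem List.nodup_append_filter_notMem {l : List (Fin n)} (hl : l.Nodup) :
    (l ++ (List.finRange n).filter (· ∉ l)).Nodup :=
  List.nodup_append.2 ⟨hl, (List.nodup_finRange n).filter _,
    by simpa using fun a ha c hc hac => hc (hac ▸ ha)⟩

theorem List.mem_append_filter_notMem (l : List (Fin n)) (i : Fin n) :
    i ∈ l ++ (List.finRange n).filter (· ∉ l) := by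
  by_cases i ∈ l <;> simp [*]

-- The element is `B_{w m a R} B_{w a m R}⁻¹`, where `R` lists the letters not in `w m a`.
theorem conj_commutatorElement_mem_permProductSubgroup {m a : Fin n} {w : List (Fin n)}
    (hw : (m :: a :: w).Nodup) :
    (w.map b).prod * ⁅b m, b a⁆ * (w.map b).prod⁻¹ ∈ permProductSubgroup b := by
  have hR : (List.finRange n).filter (· ∉ w ++ [a, m]) =
      (List.finRange n).filter (· ∉ w ++ [m, a]) :=
    List.filter_congr fun i _ => by simp [or_comm]
  have hma : (w ++ [m, a]).Nodup := List.perm_append_comm.nodup_iff.2 hw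
  have ham : (w ++ [a, m]).Nodup :=
    List.perm_append_comm.nodup_iff.2 ((List.Perm.swap m a w).nodup_iff.2 hw)
  have h₁ := prod_mem_permProductSubgroup b (List.nodup_append_filter_notMem hma)
    (List.mem_append_filter_notMem _)
  have h₂ := prod_mem_permProductSubgroup b (List.nodup_append_filter_notMem ham)
    (List.mem_append_filter_notMem _)
  rw [hR] at h₂
  convert mul_mem h₁ (inv_mem h₂) using 1
  simp only [List.map_append, List.prod_append, List.map_cons, List.map_nil, List.prod_cons,
    List.prod_nil, commutatorElement_def]
  group

theorem commutatorElement_prod_mem_permProductSubgroup {m : Fin n} {Q : List (Fin n)}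
    (hQ : (m :: Q).Nodup) : ⁅b m, (Q.map b).prod⁆ ∈ permProductSubgroup b := by
  induction Q using List.reverseRecOn with
  | nil => simp
  | append_singleton Q a ih =>
    have hmaQ : (m :: a :: Q).Nodup := ((List.perm_append_singleton a Q).cons m).nodup_iff.1 hQ
    rw [List.map_append, List.prod_append, List.map_singleton, List.prod_singleton,
      commutatorElement_mul_right_eq_mul_conj, mul_assoc _ (Q.map b).prod, mul_assoc]
    exact mul_mem (ih (hmaQ.sublist (by simp)))
      (conj_commutatorElement_mem_permProductSubgroup b hmaQ)

variable {b}

theorem prod_map_reverse_of_inv_eq (hb : ∀ i, (b i)⁻¹ = b i) (l : List (Fin n)) :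
    (l.reverse.map b).prod = (l.map b).prod⁻¹ := by
  simp [List.prod_inv_reverse, Function.comp_def, hb]

theorem conj_prod_mem_permProductSubgroup (hb : ∀ i, (b i)⁻¹ = b i) {l : List (Fin n)}
    (hl : l.Nodup) (hall : ∀ i, i ∈ l) (m : Fin n) :
    b m * (l.map b).prod * (b m)⁻¹ ∈ permProductSubgroup b := by
  obtain ⟨P, Q, rfl⟩ := List.append_of_mem (hall m)
  have hperm : (m :: (P ++ Q)).Perm (P ++ m :: Q) := List.perm_middle.symm
  have hQ : (m :: Q.reverse).Nodup := by
    simpa using (List.nodup_append.1 hl).2.1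
  have key : b m * ((P ++ m :: Q).map b).prod * (b m)⁻¹ =
      ((m :: (P ++ Q)).map b).prod * ⁅b m, (Q.reverse.map b).prod⁆⁻¹ := by
    simp only [prod_map_reverse_of_inv_eq hb, List.map_append, List.map_cons, List.prod_append,
      List.prod_cons, commutatorElement_def]
    group
  rw [key]
  exact mul_mem
    (prod_mem_permProductSubgroup b (hperm.nodup_iff.2 hl) fun i => hperm.mem_iff.2 (hall i))
    (inv_mem (commutatorElement_prod_mem_permProductSubgroup b hQ))

theorem commutator_closure_range_le_permProductSubgroup (hb : ∀ i, (b i)⁻¹ = b i) :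
    ⁅closure (Set.range b), closure (Set.range b)⁆ ≤ permProductSubgroup b := by
  refine commutator_closure_le ((closure_le _).2 ?_) ?_
  · rintro _ ⟨m, rfl⟩
    refine mem_normalizer_closure_of_inv_eq_self (hb m) ?_
    rintro _ ⟨σ, rfl⟩
    change b m * (List.ofFn fun j => b (σ j)).prod * (b m)⁻¹ ∈ permProductSubgroup b
    rw [List.ofFn_comp']
    exact conj_prod_mem_permProductSubgroup hb (List.nodup_ofFn.2 σ.injective)
      (fun i => List.mem_ofFn.2 (σ.surjective i)) m
  · rintro _ ⟨i, rfl⟩ _ ⟨j, rfl⟩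
    by_cases hij : i = j
    · simp [hij]
    · simpa using conj_commutatorElement_mem_permProductSubgroup b (w := []) (by simp [hij])

theorem PresentedGroup.of_inv_relsG (k : ℕ) (i : Fin (k + 1)) :
    (PresentedGroup.of (rels := relsG k) i)⁻¹ = PresentedGroup.of i :=
  inv_eq_of_mul_eq_one_right <| by
    have hsq := PresentedGroup.one_of_mem (rels := relsG k) (Or.inl ⟨i, rfl⟩)
    rwa [map_pow, sq] at hsq

end

theorem stmt_10_general (k : ℕ) : ⁅Hk k, Hk k⁆ ≤ Kk k :=
  commutator_closure_range_le_permProductSubgroup fun i => PresentedGroup.of_inv_relsG k i.castSucc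

/-- For every `k ≥ 2`, the subgroup `K_k` of `G_{k+1}^k` contains the commutator
subgroup of `H_k`; that is, `⁅H_k, H_k⁆ ≤ K_k`. -/
theorem stmt_10 (k : ℕ) (hk : 2 ≤ k) : ⁅Hk k, Hk k⁆ ≤ Kk k :=
  stmt_10_general k
end
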